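/- arXiv:2405.16228 — 3 statements merged into one kernel-verified Lean document; each statement's English description precedes it below -/
import Mathlib

section
/- Fix α > 0 and an integer i ≥ 1. For w ∈ D define f_w^{[i]}(z) = z^i/(1-\bar{w}z)^{α+i}. Then ‖f_w^{[i]}‖_{B^α} ≍ (1-|w|²)^{-(i+1)}, i.e. there exist constants c, C > 0 independent of w such that c(1-|w|²)^{-(i+1)} ≤ ‖f_w^{[i]}‖_{B^α} ≤ C(1-|w|²)^{-(i+1)} for all w ∈ D. -/
open Complex Metric Filter Topology

noncomputable section

def UDisk : Set ℂ := Metric.ball 0 1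

def bSemi (α : ℝ) (f : ℂ → ℂ) : ℝ :=
  ⨆ z : UDisk, (1 - ‖(z : ℂ)‖ ^ 2) ^ α * ‖deriv f (z : ℂ)‖

def bNorm (α : ℝ) (f : ℂ → ℂ) : ℝ := ‖f 0‖ + bSemi α f

def MemBloch (α : ℝ) (f : ℂ → ℂ) : Prop :=
  DifferentiableOn ℂ f UDisk ∧
    ∃ C : ℝ, ∀ z ∈ UDisk, (1 - ‖z‖ ^ 2) ^ α * ‖deriv f z‖ ≤ C

def intOp (f : ℂ → ℂ) : ℂ → ℂ := fun z => z * ∫ t in (0:ℝ)..1, f (t * z)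

def Ig (g : ℂ → ℂ) (n k : ℕ) (f : ℂ → ℂ) : ℂ → ℂ :=
  intOp^[n] (fun z => iteratedDeriv k f z * g z)

def BoundedOp (α β : ℝ) (T : (ℂ → ℂ) → (ℂ → ℂ)) : Prop :=
  ∃ C > 0, ∀ f, MemBloch α f → MemBloch β (T f) ∧ bNorm β (T f) ≤ C * bNorm α f

def CompactOp (α β : ℝ) (T : (ℂ → ℂ) → (ℂ → ℂ)) : Prop :=
  BoundedOp α β T ∧
    ∀ (F : ℕ → ℂ → ℂ) (M : ℝ), (∀ j, MemBloch α (F j)) → (∀ j, bNorm α (F j) ≤ M) →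
      ∃ (φ : ℕ → ℕ) (h : ℂ → ℂ), StrictMono φ ∧ MemBloch β h ∧
        Tendsto (fun j => bNorm β (T (F (φ j)) - h)) atTop (nhds 0)

def fwi (α : ℝ) (i : ℕ) (w : ℂ) : ℂ → ℂ :=
  fun z => z ^ i / (1 - (starRingEnd ℂ) w * z) ^ ((α : ℂ) + (i : ℂ))

namespace Stmt4Aux

lemma mem_UDisk {z : ℂ} : z ∈ UDisk ↔ ‖z‖ < 1 := by
  rw [UDisk, mem_ball_zero_iff]

instance : Nonempty ↥UDisk := ⟨⟨0, by simp [mem_UDisk]⟩⟩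

lemma re_pos {w z : ℂ} (hw : ‖w‖ < 1) (hz : ‖z‖ < 1) :
    0 < (1 - (starRingEnd ℂ) w * z).re := by
  have h1 : ‖(starRingEnd ℂ) w * z‖ < 1 := by
    rw [norm_mul, Complex.norm_conj]
    nlinarith [norm_nonneg w, norm_nonneg z]
  have h2 := Complex.re_le_norm ((starRingEnd ℂ) w * z)
  simp only [Complex.sub_re, Complex.one_re]
  linarith

lemma abs_one_sub_ge {w z : ℂ} :
    1 - ‖w‖ * ‖z‖ ≤ ‖1 - (starRingEnd ℂ) w * z‖ := by
  have := norm_sub_norm_le (1:ℂ) ((starRingEnd ℂ) w * z)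
  simpa [norm_mul, Complex.norm_conj] using this

lemma hasDerivAt_fwi (α : ℝ) (i : ℕ) {w z : ℂ} (hw : ‖w‖ < 1)
    (hz : ‖z‖ < 1) :
    HasDerivAt (fwi α i w)
      ((i : ℂ) * z ^ (i-1) * (1 - (starRingEnd ℂ) w * z) ^ (-((α:ℂ)+(i:ℂ)))
        + z ^ i * (((α:ℂ)+(i:ℂ)) * (starRingEnd ℂ) w
            * (1 - (starRingEnd ℂ) w * z) ^ (-((α:ℂ)+(i:ℂ)) - 1))) z := by
  have hbase : HasDerivAt (fun z : ℂ => 1 - (starRingEnd ℂ) w * z) (-((starRingEnd ℂ) w)) z := by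
    simpa using ((hasDerivAt_id z).const_mul ((starRingEnd ℂ) w)).const_sub 1
  have hslit : (1 - (starRingEnd ℂ) w * z) ∈ Complex.slitPlane :=
    Complex.mem_slitPlane_iff.mpr (Or.inl (re_pos hw hz))
  have h2 : HasDerivAt (fun z : ℂ => (1 - (starRingEnd ℂ) w * z) ^ (-((α:ℂ)+(i:ℂ))))
      (((α:ℂ)+(i:ℂ)) * (starRingEnd ℂ) w
        * (1 - (starRingEnd ℂ) w * z) ^ (-((α:ℂ)+(i:ℂ)) - 1)) z := by
    have := hbase.cpow_const (c := -((α:ℂ)+(i:ℂ))) hslit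
    convert this using 1
    ring
  have h1 := hasDerivAt_pow i z
  have hmul := h1.mul h2
  have hfun : fwi α i w = fun z : ℂ =>
      z ^ i * (1 - (starRingEnd ℂ) w * z) ^ (-((α:ℂ)+(i:ℂ))) := by
    funext ζ
    rw [fwi, Complex.cpow_neg, div_eq_mul_inv]
  rw [hfun]
  exact hmul

lemma real_upper {α : ℝ} (hα : 0 < α) (i : ℕ) {s t a : ℝ}
    (hs : 0 < s) (hs1 : s ≤ 1) (ht : 0 ≤ t) (hta : t ≤ 2*a) (hsa : s ≤ 2*a) :
    t^α * ((i:ℝ) * a^(-(α+(i:ℝ))) + (α+(i:ℝ)) * a^(-(α+(i:ℝ)+1)))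
      ≤ (2^α * 2^(i+1) * (α+2*(i:ℝ))) / s^(i+1) := by
  have ha : 0 < a := by linarith
  set K : ℝ := 2^(i+1) / s^(i+1) with hK
  have hKpos : 0 < K := by positivity
  have e1 : a^α * a^(-(α+(i:ℝ))) = a^(-(i:ℝ)) := by
    rw [← Real.rpow_add ha]; congr 1; ring
  have e2 : a^α * a^(-(α+(i:ℝ)+1)) = a^(-((i:ℝ)+1)) := by
    rw [← Real.rpow_add ha]; congr 1; ring
  have k0 : ∀ n : ℕ, a^(-(n:ℝ)) ≤ 2^n / s^n := by
    intro n
    have h1 : a^(-(n:ℝ)) ≤ (s/2)^(-(n:ℝ)) :=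
      Real.rpow_le_rpow_of_nonpos (by positivity) (by linarith)
        (neg_nonpos.2 (Nat.cast_nonneg n))
    have h2 : (s/2)^(-(n:ℝ)) = 2^n / s^n := by
      rw [Real.rpow_neg (by positivity), Real.rpow_natCast, div_pow, inv_div]
    linarith [h1, h2 ▸ h1]
  have k1 : a^(-(i:ℝ)) ≤ K := by
    have := k0 i
    have h3 : 2^i / s^i ≤ K := by
      rw [hK, div_le_div_iff₀ (by positivity) (by positivity)]
      have : s^(i+1) ≤ s^i := pow_le_pow_of_le_one hs.le hs1 (by omega)
      calc 2^i * s^(i+1) ≤ 2^i * s^i := by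
            nlinarith [pow_pos (show (0:ℝ) < 2 by norm_num) i]
        _ ≤ 2^(i+1) * s^i := by
            have h4 : (2:ℝ)^i ≤ 2^(i+1) := pow_le_pow_right₀ (by norm_num) (by omega)
            exact mul_le_mul_of_nonneg_right h4 (pow_nonneg hs.le i)
    linarith
  have k2 : a^(-((i:ℝ)+1)) ≤ K := by
    have := k0 (i+1)
    push_cast at this
    rw [hK]; linarith
  have hB : (0:ℝ) ≤ (i:ℝ) * a^(-(α+(i:ℝ))) + (α+(i:ℝ)) * a^(-(α+(i:ℝ)+1)) := by positivity
  have step1 : t^α ≤ 2^α * a^α := by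
    calc t^α ≤ (2*a)^α := Real.rpow_le_rpow ht hta hα.le
      _ = 2^α * a^α := Real.mul_rpow (by norm_num) ha.le
  calc t^α * ((i:ℝ) * a^(-(α+(i:ℝ))) + (α+(i:ℝ)) * a^(-(α+(i:ℝ)+1)))
      ≤ (2^α * a^α) * ((i:ℝ) * a^(-(α+(i:ℝ))) + (α+(i:ℝ)) * a^(-(α+(i:ℝ)+1))) :=
        mul_le_mul_of_nonneg_right step1 hB
    _ = 2^α * ((i:ℝ) * (a^α * a^(-(α+(i:ℝ)))) + (α+(i:ℝ)) * (a^α * a^(-(α+(i:ℝ)+1)))) := by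
        ring
    _ = 2^α * ((i:ℝ) * a^(-(i:ℝ)) + (α+(i:ℝ)) * a^(-((i:ℝ)+1))) := by rw [e1, e2]
    _ ≤ 2^α * ((i:ℝ) * K + (α+(i:ℝ)) * K) := by
        have h2α : (0:ℝ) ≤ 2^α := Real.rpow_nonneg (by norm_num) α
        apply mul_le_mul_of_nonneg_left _ h2α
        have := mul_le_mul_of_nonneg_left k1 (Nat.cast_nonneg i : (0:ℝ) ≤ (i:ℝ))
        have := mul_le_mul_of_nonneg_left k2 (by positivity : (0:ℝ) ≤ α + (i:ℝ))
        linarith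
    _ = (2^α * 2^(i+1) * (α+2*(i:ℝ))) / s^(i+1) := by
        rw [hK]; field_simp; ring

lemma cpow_abs_eq (u : ℂ) (r : ℝ) : ‖u ^ ((r:ℝ):ℂ)‖ = ‖u‖ ^ r :=
  Complex.norm_cpow_real u r

lemma exp_cast1 (α : ℝ) (i : ℕ) : -((α:ℂ)+(i:ℂ)) = ((-(α+(i:ℝ)) : ℝ) : ℂ) := by
  push_cast; ring

lemma exp_cast2 (α : ℝ) (i : ℕ) : -((α:ℂ)+(i:ℂ)) - 1 = ((-(α+(i:ℝ)+1) : ℝ) : ℂ) := by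
  push_cast; ring

lemma pointwise_upper {α : ℝ} (hα : 0 < α) (i : ℕ) {w z : ℂ}
    (hw : ‖w‖ < 1) (hz : ‖z‖ < 1) :
    (1 - ‖z‖ ^ 2) ^ α * ‖deriv (fwi α i w) z‖
      ≤ (2^α * 2^(i+1) * (α+2*(i:ℝ))) / (1 - ‖w‖ ^ 2)^(i+1) := by
  have h0w := norm_nonneg w
  have h0z := norm_nonneg z
  set a := ‖1 - (starRingEnd ℂ) w * z‖ with hadef
  have hwz : ‖w‖ * ‖z‖ < 1 := by nlinarith
  have ha : 1 - ‖w‖ * ‖z‖ ≤ a := abs_one_sub_ge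
  rw [(hasDerivAt_fwi α i hw hz).deriv]
  have habs1 : ‖(1 - (starRingEnd ℂ) w * z) ^ (-((α:ℂ)+(i:ℂ)))‖
      = a ^ (-(α+(i:ℝ))) := by rw [exp_cast1, cpow_abs_eq]
  have habs2 : ‖(1 - (starRingEnd ℂ) w * z) ^ (-((α:ℂ)+(i:ℂ)) - 1)‖
      = a ^ (-(α+(i:ℝ)+1)) := by rw [exp_cast2, cpow_abs_eq]
  have hD : ‖(i : ℂ) * z ^ (i-1) * (1 - (starRingEnd ℂ) w * z) ^ (-((α:ℂ)+(i:ℂ)))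
        + z ^ i * (((α:ℂ)+(i:ℂ)) * (starRingEnd ℂ) w
            * (1 - (starRingEnd ℂ) w * z) ^ (-((α:ℂ)+(i:ℂ)) - 1))‖
      ≤ (i:ℝ) * a ^ (-(α+(i:ℝ))) + (α+(i:ℝ)) * a ^ (-(α+(i:ℝ)+1)) := by
    refine (norm_add_le _ _).trans ?_
    have t1 : ‖(i : ℂ) * z ^ (i-1)
        * (1 - (starRingEnd ℂ) w * z) ^ (-((α:ℂ)+(i:ℂ)))‖
        ≤ (i:ℝ) * a ^ (-(α+(i:ℝ))) := by
      rw [norm_mul, norm_mul, habs1, norm_pow, Complex.norm_natCast]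
      have hz1 : ‖z‖ ^ (i-1) ≤ 1 := pow_le_one₀ h0z hz.le
      have hA : (0:ℝ) ≤ a ^ (-(α+(i:ℝ))) := Real.rpow_nonneg (norm_nonneg _) _
      have := mul_le_mul_of_nonneg_right
        (mul_le_mul_of_nonneg_left hz1 (Nat.cast_nonneg (α := ℝ) i)) hA
      linarith
    have t2 : ‖z ^ i * (((α:ℂ)+(i:ℂ)) * (starRingEnd ℂ) w
        * (1 - (starRingEnd ℂ) w * z) ^ (-((α:ℂ)+(i:ℂ)) - 1))‖
        ≤ (α+(i:ℝ)) * a ^ (-(α+(i:ℝ)+1)) := by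
      rw [norm_mul, norm_mul, norm_mul, habs2, norm_pow, Complex.norm_conj]
      have hz1 : ‖z‖ ^ i ≤ 1 := pow_le_one₀ h0z hz.le
      have hαi : ‖(α:ℂ)+(i:ℂ)‖ = α + (i:ℝ) := by
        rw [show (α:ℂ)+(i:ℂ) = (((α+(i:ℝ)):ℝ):ℂ) by push_cast; ring, Complex.norm_real, Real.norm_eq_abs]
        exact abs_of_nonneg (by positivity)
      rw [hαi]
      have h2 : (0:ℝ) ≤ a ^ (-(α+(i:ℝ)+1)) := Real.rpow_nonneg (norm_nonneg _) _
      have hnn : (0:ℝ) ≤ α + (i:ℝ) := by positivity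
      have p1 : (α+(i:ℝ)) * ‖w‖ ≤ (α+(i:ℝ)) := by nlinarith
      have p2 := mul_le_mul_of_nonneg_right p1 h2
      have p0 : (0:ℝ) ≤ (α+(i:ℝ)) * ‖w‖ * a ^ (-(α+(i:ℝ)+1)) := by positivity
      have p3 := mul_le_mul_of_nonneg_right hz1 p0
      linarith
    linarith
  have hs : 0 < 1 - ‖w‖ ^ 2 := by nlinarith
  have hs1 : 1 - ‖w‖ ^ 2 ≤ 1 := by nlinarith
  have ht : (0:ℝ) ≤ 1 - ‖z‖ ^ 2 := by nlinarith
  have hta : 1 - ‖z‖ ^ 2 ≤ 2 * a := by nlinarith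
  have hsa : 1 - ‖w‖ ^ 2 ≤ 2 * a := by nlinarith
  calc (1 - ‖z‖ ^ 2) ^ α * ‖_‖
      ≤ (1 - ‖z‖ ^ 2) ^ α
          * ((i:ℝ) * a ^ (-(α+(i:ℝ))) + (α+(i:ℝ)) * a ^ (-(α+(i:ℝ)+1))) :=
        mul_le_mul_of_nonneg_left hD (Real.rpow_nonneg ht α)
    _ ≤ (2^α * 2^(i+1) * (α+2*(i:ℝ))) / (1 - ‖w‖ ^ 2)^(i+1) :=
        real_upper hα i hs hs1 ht hta hsa

lemma deriv_special {α : ℝ} (hα : 0 < α) {i : ℕ} (hi : 1 ≤ i) {w z : ℂ}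
    (hw : ‖w‖ < 1) (hz : ‖z‖ < 1)
    (hr : (starRingEnd ℂ) w * z = ((‖w‖ * ‖z‖ : ℝ) : ℂ)) :
    ‖deriv (fwi α i w) z‖ = (‖z‖)^(i-1) *
      ((i:ℝ) * (1 - ‖w‖ * ‖z‖) ^ (-(α+(i:ℝ)))
        + (α+(i:ℝ)) * (‖w‖ * ‖z‖)
          * (1 - ‖w‖ * ‖z‖) ^ (-(α+(i:ℝ)+1))) := by
  have h0w := norm_nonneg w
  have h0z := norm_nonneg z
  set ρ : ℝ := ‖w‖ * ‖z‖ with hρ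
  have hρ1 : ρ < 1 := by nlinarith
  set m : ℝ := 1 - ρ with hm
  have hm0 : 0 < m := by linarith
  rw [(hasDerivAt_fwi α i hw hz).deriv]
  have hu : 1 - (starRingEnd ℂ) w * z = ((m:ℝ):ℂ) := by
    rw [hr, hm]; push_cast; ring
  have hc1 : ((m:ℝ):ℂ) ^ (-((α:ℂ)+(i:ℂ))) = (((m ^ (-(α+(i:ℝ))) : ℝ)):ℂ) := by
    rw [show -((α:ℂ)+(i:ℂ)) = ((-(α+(i:ℝ)) : ℝ) : ℂ) by push_cast; ring]
    exact (Complex.ofReal_cpow hm0.le _).symm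
  have hc2 : ((m:ℝ):ℂ) ^ (-((α:ℂ)+(i:ℂ)) - 1) = (((m ^ (-(α+(i:ℝ)+1)) : ℝ)):ℂ) := by
    rw [show -((α:ℂ)+(i:ℂ)) - 1 = ((-(α+(i:ℝ)+1) : ℝ) : ℂ) by push_cast; ring]
    exact (Complex.ofReal_cpow hm0.le _).symm
  have hzpow : z ^ i = z ^ (i-1) * z := by
    conv_lhs => rw [show i = (i-1)+1 by omega]
    rw [pow_succ]
  have key : (i : ℂ) * z ^ (i-1) * (1 - (starRingEnd ℂ) w * z) ^ (-((α:ℂ)+(i:ℂ)))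
        + z ^ i * (((α:ℂ)+(i:ℂ)) * (starRingEnd ℂ) w
            * (1 - (starRingEnd ℂ) w * z) ^ (-((α:ℂ)+(i:ℂ)) - 1))
      = z ^ (i-1) * ((((i:ℝ) * m ^ (-(α+(i:ℝ)))
          + (α+(i:ℝ)) * ρ * m ^ (-(α+(i:ℝ)+1)) : ℝ)) : ℂ) := by
    rw [hu, hc1, hc2, hzpow]
    have hre : ((i:ℂ)) * z ^ (i-1) * ((m ^ (-(α+(i:ℝ))) : ℝ):ℂ)
        + z ^ (i-1) * z * (((α:ℂ)+(i:ℂ)) * (starRingEnd ℂ) w * ((m ^ (-(α+(i:ℝ)+1)) : ℝ):ℂ))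
        = z ^ (i-1) * ((i:ℂ) * ((m ^ (-(α+(i:ℝ))) : ℝ):ℂ)
            + ((α:ℂ)+(i:ℂ)) * ((starRingEnd ℂ) w * z) * ((m ^ (-(α+(i:ℝ)+1)) : ℝ):ℂ)) := by
      ring
    rw [hre, hr]
    push_cast
    ring
  have hρ0 : 0 ≤ ρ := mul_nonneg h0w h0z
  have hE : (0:ℝ) ≤ (i:ℝ) * m ^ (-(α+(i:ℝ))) + (α+(i:ℝ)) * ρ * m ^ (-(α+(i:ℝ)+1)) :=
    add_nonneg (mul_nonneg (Nat.cast_nonneg i) (Real.rpow_nonneg hm0.le _))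
      (mul_nonneg (mul_nonneg (by positivity) hρ0) (Real.rpow_nonneg hm0.le _))
  rw [key, norm_mul, norm_pow, Complex.norm_real, Real.norm_eq_abs, _root_.abs_of_nonneg hE]

lemma case1 {α : ℝ} (hα : 0 < α) (i : ℕ) {b : ℝ} (hb : 1/2 ≤ b) (hb1 : b < 1) :
    ((α+(i:ℝ))/4 * (1/2)^(i-1)) / (1-b^2)^(i+1) ≤
      (1-b^2)^α * (b^(i-1) * ((i:ℝ) * (1-b*b)^(-(α+(i:ℝ)))
        + (α+(i:ℝ)) * (b*b) * (1-b*b)^(-(α+(i:ℝ)+1)))) := by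
  have hm : 0 < 1-b^2 := by nlinarith
  have hbb : 1-b*b = 1-b^2 := by ring
  rw [hbb]
  set m : ℝ := 1-b^2 with hmdef
  have e : m^α * m^(-(α+(i:ℝ)+1)) = (m^(i+1))⁻¹ := by
    rw [← Real.rpow_add hm, show α + -(α+(i:ℝ)+1) = -(((i+1:ℕ)):ℝ) by push_cast; ring,
      Real.rpow_neg hm.le, Real.rpow_natCast]
  have hQ : (0:ℝ) ≤ m^(-(α+(i:ℝ)+1)) := Real.rpow_nonneg hm.le _
  have hP : (0:ℝ) ≤ (i:ℝ) * m^(-(α+(i:ℝ))) :=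
    mul_nonneg (Nat.cast_nonneg i) (Real.rpow_nonneg hm.le _)
  have hnn : (0:ℝ) ≤ α + (i:ℝ) := by positivity
  calc ((α+(i:ℝ))/4 * (1/2)^(i-1)) / (1-b^2)^(i+1)
      = m^α * ((1/2:ℝ)^(i-1) * ((α+(i:ℝ)) * (1/4) * m^(-(α+(i:ℝ)+1)))) := by
        rw [div_eq_mul_inv, ← hmdef, ← e]; ring
    _ ≤ m^α * (b^(i-1) * ((i:ℝ) * m^(-(α+(i:ℝ)))
          + (α+(i:ℝ)) * (b*b) * m^(-(α+(i:ℝ)+1)))) := by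
        apply mul_le_mul_of_nonneg_left _ (Real.rpow_nonneg hm.le α)
        have h1 : (1/2:ℝ)^(i-1) ≤ b^(i-1) := pow_le_pow_left₀ (by norm_num) hb _
        have h2 : (α+(i:ℝ)) * (1/4) * m^(-(α+(i:ℝ)+1))
            ≤ (α+(i:ℝ)) * (b*b) * m^(-(α+(i:ℝ)+1)) := by
          apply mul_le_mul_of_nonneg_right _ hQ
          have hbb4 : (1/4:ℝ) ≤ b*b := by nlinarith
          exact mul_le_mul_of_nonneg_left hbb4 hnn
        calc (1/2:ℝ)^(i-1) * ((α+(i:ℝ)) * (1/4) * m^(-(α+(i:ℝ)+1)))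
            ≤ b^(i-1) * ((α+(i:ℝ)) * (b*b) * m^(-(α+(i:ℝ)+1))) := by
              exact mul_le_mul h1 h2 (mul_nonneg (mul_nonneg hnn (by norm_num)) hQ)
                (pow_nonneg (by linarith) _)
          _ ≤ b^(i-1) * ((i:ℝ) * m^(-(α+(i:ℝ))) + (α+(i:ℝ)) * (b*b) * m^(-(α+(i:ℝ)+1))) := by
              have hb0 : (0:ℝ) ≤ b^(i-1) := pow_nonneg (by linarith) _
              nlinarith [mul_le_mul_of_nonneg_left hP hb0]

lemma case2 {α : ℝ} (hα : 0 < α) {i : ℕ} (hi : 1 ≤ i) {b : ℝ} (hb0 : 0 ≤ b) (hb : b < 1/2) :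
    ((3/4:ℝ)^α * (1/2)^(i-1) * (i:ℝ) * (3/4)^(i+1)) / (1-b^2)^(i+1)
      ≤ (1 - (1/2:ℝ)^2)^α * ((1/2:ℝ)^(i-1) * ((i:ℝ) * (1-b*(1/2))^(-(α+(i:ℝ)))
          + (α+(i:ℝ)) * (b*(1/2)) * (1-b*(1/2))^(-(α+(i:ℝ)+1)))) := by
  have hm : (3/4:ℝ) < 1 - b*(1/2) := by nlinarith
  have hm1 : 1 - b*(1/2) ≤ 1 := by nlinarith
  have hm0 : (0:ℝ) < 1 - b*(1/2) := by linarith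
  have hone : (1:ℝ) ≤ (1-b*(1/2))^(-(α+(i:ℝ))) :=
    Real.one_le_rpow_of_pos_of_le_one_of_nonpos hm0 hm1 (neg_nonpos.2 (by positivity))
  have hsecond : (0:ℝ) ≤ (α+(i:ℝ)) * (b*(1/2)) * (1-b*(1/2))^(-(α+(i:ℝ)+1)) := by
    apply mul_nonneg (mul_nonneg (by positivity) (by linarith))
    exact Real.rpow_nonneg hm0.le _
  have hE : (i:ℝ) ≤ (i:ℝ) * (1-b*(1/2))^(-(α+(i:ℝ)))
      + (α+(i:ℝ)) * (b*(1/2)) * (1-b*(1/2))^(-(α+(i:ℝ)+1)) := by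
    have := mul_le_mul_of_nonneg_left hone (Nat.cast_nonneg (α := ℝ) i)
    linarith
  have hq : (1 - (1/2:ℝ)^2)^α = (3/4:ℝ)^α := by norm_num
  have hden : (3/4:ℝ)^(i+1) ≤ (1-b^2)^(i+1) := by
    apply pow_le_pow_left₀ (by norm_num)
    nlinarith
  have hN : (0:ℝ) ≤ (3/4:ℝ)^α * (1/2)^(i-1) * (i:ℝ) * (3/4)^(i+1) := by
    have : (0:ℝ) ≤ (3/4:ℝ)^α := Real.rpow_nonneg (by norm_num) α
    positivity
  calc ((3/4:ℝ)^α * (1/2)^(i-1) * (i:ℝ) * (3/4)^(i+1)) / (1-b^2)^(i+1)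
      ≤ ((3/4:ℝ)^α * (1/2)^(i-1) * (i:ℝ) * (3/4)^(i+1)) / (3/4)^(i+1) :=
        div_le_div_of_nonneg_left hN (by positivity) hden
    _ = (3/4:ℝ)^α * ((1/2:ℝ)^(i-1) * (i:ℝ)) := by
        field_simp
    _ ≤ (1 - (1/2:ℝ)^2)^α * ((1/2:ℝ)^(i-1) * ((i:ℝ) * (1-b*(1/2))^(-(α+(i:ℝ)))
          + (α+(i:ℝ)) * (b*(1/2)) * (1-b*(1/2))^(-(α+(i:ℝ)+1)))) := by
        rw [hq]
        have h34 : (0:ℝ) ≤ (3/4:ℝ)^α := Real.rpow_nonneg (by norm_num) α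
        apply mul_le_mul_of_nonneg_left _ h34
        apply mul_le_mul_of_nonneg_left hE (by positivity)

end Stmt4Aux

open Stmt4Aux in
theorem stmt4 (α : ℝ) (hα : 0 < α) (i : ℕ) (hi : 1 ≤ i) :
    ∃ c > 0, ∃ C > 0, ∀ w ∈ UDisk,
      c / (1 - ‖w‖ ^ 2) ^ (i + 1) ≤ bNorm α (fwi α i w) ∧
        bNorm α (fwi α i w) ≤ C / (1 - ‖w‖ ^ 2) ^ (i + 1) := by
  have hi0 : (0:ℝ) < (i:ℝ) := by exact_mod_cast hi
  refine ⟨min ((α+(i:ℝ))/4 * (1/2)^(i-1)) ((3/4:ℝ)^α * (1/2)^(i-1) * (i:ℝ) * (3/4)^(i+1)),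
    ?_, 2^α * 2^(i+1) * (α+2*(i:ℝ)), ?_, ?_⟩
  · apply lt_min
    · positivity
    · have : (0:ℝ) < (3/4:ℝ)^α := Real.rpow_pos_of_pos (by norm_num) α
      positivity
  · have : (0:ℝ) < (2:ℝ)^α := Real.rpow_pos_of_pos (by norm_num) α
    positivity
  · intro w hwU
    have hw : ‖w‖ < 1 := mem_UDisk.mp hwU
    have h0w := norm_nonneg w
    have hs : 0 < 1 - ‖w‖ ^ 2 := by nlinarith
    have hbdd : BddAbove (Set.range fun z : UDisk =>
        (1 - ‖(z : ℂ)‖ ^ 2) ^ α * ‖deriv (fwi α i w) (z : ℂ)‖) := by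
      refine ⟨(2^α * 2^(i+1) * (α+2*(i:ℝ))) / (1 - ‖w‖ ^ 2)^(i+1), ?_⟩
      rintro x ⟨⟨z, hz⟩, rfl⟩
      exact pointwise_upper hα i hw (mem_UDisk.mp hz)
    have hupper : bSemi α (fwi α i w)
        ≤ (2^α * 2^(i+1) * (α+2*(i:ℝ))) / (1 - ‖w‖ ^ 2)^(i+1) := by
      apply ciSup_le
      rintro ⟨z, hz⟩
      exact pointwise_upper hα i hw (mem_UDisk.mp hz)
    have hf0 : fwi α i w 0 = 0 := by
      simp [fwi, zero_pow (show i ≠ 0 by omega)]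
    have hbn : bNorm α (fwi α i w) = bSemi α (fwi α i w) := by
      rw [bNorm, hf0]
      simp
    constructor
    · -- lower bound
      rcases le_or_gt (1/2 : ℝ) (‖w‖) with hcase | hcase
      · -- use z = w
        have hr : (starRingEnd ℂ) w * w
            = ((‖w‖ * ‖w‖ : ℝ) : ℂ) := by
          rw [mul_comm, Complex.mul_conj]
          norm_cast
          rw [Complex.normSq_eq_norm_sq]
          ring
        have hds := deriv_special hα hi hw hw hr
        have hle : (1 - ‖w‖ ^ 2) ^ α * ‖deriv (fwi α i w) w‖
            ≤ bSemi α (fwi α i w) :=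
          le_ciSup hbdd (⟨w, hwU⟩ : ↥UDisk)
        rw [hds] at hle
        have hkey := case1 hα i hcase hw
        rw [hbn]
        calc min ((α+(i:ℝ))/4 * (1/2)^(i-1))
              ((3/4:ℝ)^α * (1/2)^(i-1) * (i:ℝ) * (3/4)^(i+1))
              / (1 - ‖w‖ ^ 2) ^ (i + 1)
            ≤ ((α+(i:ℝ))/4 * (1/2)^(i-1)) / (1 - ‖w‖ ^ 2) ^ (i + 1) := by
              apply div_le_div_of_nonneg_right ?_ (by positivity)
              exact min_le_left _ _
          _ ≤ (1 - ‖w‖ ^ 2) ^ α * (‖w‖ ^ (i-1)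
                * ((i:ℝ) * (1 - ‖w‖ * ‖w‖) ^ (-(α+(i:ℝ)))
                  + (α+(i:ℝ)) * (‖w‖ * ‖w‖)
                    * (1 - ‖w‖ * ‖w‖) ^ (-(α+(i:ℝ)+1)))) :=
              hkey
          _ ≤ bSemi α (fwi α i w) := by
              have := hle
              linarith [hle]
      · -- use z with |z| = 1/2 on the ray of w
        set z₀ : ℂ := if w = 0 then (1/2 : ℂ) else w / (2 * (‖w‖ : ℂ)) with hz₀
        have habs : ‖z₀‖ = 1/2 := by
          by_cases hw0 : w = 0
          · simp [hz₀, hw0]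
          · have hwne : ‖w‖ ≠ 0 := by
              simpa [norm_eq_zero] using hw0
            simp only [hz₀, if_neg hw0, norm_div, norm_mul]
            rw [Complex.norm_real, Real.norm_eq_abs, Complex.norm_two, _root_.abs_of_nonneg h0w]
            field_simp
        have hzU : z₀ ∈ UDisk := by
          rw [mem_UDisk, habs]; norm_num
        have hz1 : ‖z₀‖ < 1 := mem_UDisk.mp hzU
        have hr : (starRingEnd ℂ) w * z₀
            = ((‖w‖ * ‖z₀‖ : ℝ) : ℂ) := by
          by_cases hw0 : w = 0
          · simp [hz₀, hw0]
          · have hwne : (‖w‖ : ℝ) ≠ 0 := by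
              simpa [norm_eq_zero] using hw0
            rw [habs]
            simp only [hz₀, if_neg hw0]
            have hne : (2 * ((‖w‖ : ℝ) : ℂ)) ≠ 0 :=
              mul_ne_zero two_ne_zero (Complex.ofReal_ne_zero.mpr hwne)
            rw [mul_div_assoc', div_eq_iff hne]
            rw [mul_comm ((starRingEnd ℂ) w) w, Complex.mul_conj]
            push_cast [Complex.normSq_eq_norm_sq]
            ring
        have hds := deriv_special hα hi hw hz1 hr
        have hle : (1 - ‖z₀‖ ^ 2) ^ α * ‖deriv (fwi α i w) z₀‖
            ≤ bSemi α (fwi α i w) :=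
          le_ciSup hbdd (⟨z₀, hzU⟩ : ↥UDisk)
        rw [hds, habs] at hle
        have hkey := case2 hα hi h0w hcase
        rw [hbn]
        calc min ((α+(i:ℝ))/4 * (1/2)^(i-1))
              ((3/4:ℝ)^α * (1/2)^(i-1) * (i:ℝ) * (3/4)^(i+1))
              / (1 - ‖w‖ ^ 2) ^ (i + 1)
            ≤ ((3/4:ℝ)^α * (1/2)^(i-1) * (i:ℝ) * (3/4)^(i+1))
              / (1 - ‖w‖ ^ 2) ^ (i + 1) := by
              apply div_le_div_of_nonneg_right ?_ (by positivity)
              exact min_le_right _ _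
          _ ≤ (1 - (1/2:ℝ)^2)^α * ((1/2:ℝ)^(i-1)
                * ((i:ℝ) * (1-‖w‖*(1/2))^(-(α+(i:ℝ)))
                  + (α+(i:ℝ)) * (‖w‖*(1/2))
                    * (1-‖w‖*(1/2))^(-(α+(i:ℝ)+1)))) := hkey
          _ ≤ bSemi α (fwi α i w) := hle
    · rw [hbn]
      exact hupper
end
end

section
/- Fix α > 0 and nonzero complex scalars c₀, c₁. Then there is a constant c > 0 such that for all w ∈ D with |w| > 1/2, ‖c₀ f_w^{[0]} + c₁ f_w^{[1]}‖_{B^α} ≥ c (|c₀| ‖f_w^{[0]}‖_{B^α} + |c₁| ‖f_w^{[1]}‖_{B^α}). -/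
open Complex Metric Filter Topology

noncomputable section

/-! ### Auxiliary lemmas -/

lemma mem_UDisk {z : ℂ} : z ∈ UDisk ↔ ‖z‖ < 1 := by
  simp [UDisk, Complex.dist_eq]

instance : Nonempty ↥UDisk := ⟨⟨0, by simp [UDisk]⟩⟩

lemma est {a s t σ r : ℝ} (ha : 0 < a) (hs : 0 ≤ s) (ht : 0 < t) (hσ : 0 < σ)
    (hr1 : σ/2 ≤ r) (hr2 : t/2 ≤ r) :
    σ^a * r^(-(a+s)) ≤ 2^(a+s) * t^(-s) := by
  have hr : 0 < r := lt_of_lt_of_le (by positivity) hr2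
  have h1 : (σ/2)^a ≤ r^a := Real.rpow_le_rpow (by positivity) hr1 ha.le
  have h2 : (t/2)^s ≤ r^s := Real.rpow_le_rpow (by positivity) hr2 hs
  have hp1 : (0:ℝ) < (σ/2)^a := Real.rpow_pos_of_pos (by positivity) a
  have hp2 : (0:ℝ) < (t/2)^s := Real.rpow_pos_of_pos (by positivity) s
  have hkey : r ^ (-(a+s)) ≤ ((σ/2)^a * (t/2)^s)⁻¹ := by
    rw [Real.rpow_neg hr.le, Real.rpow_add hr]
    exact inv_anti₀ (by positivity) (mul_le_mul h1 h2 hp2.le (Real.rpow_pos_of_pos hr a).le)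
  calc σ^a * r^(-(a+s)) ≤ σ^a * ((σ/2)^a * (t/2)^s)⁻¹ := by
        exact mul_le_mul_of_nonneg_left hkey (Real.rpow_pos_of_pos hσ a).le
    _ = 2^(a+s) * t^(-s) := by
        rw [Real.div_rpow hσ.le (by norm_num), Real.div_rpow ht.le (by norm_num),
          Real.rpow_add (by norm_num : (0:ℝ) < 2), Real.rpow_neg ht.le]
        have h3 : σ^a ≠ 0 := (Real.rpow_pos_of_pos hσ a).ne'
        have h4 : t^s ≠ 0 := (Real.rpow_pos_of_pos ht s).ne'
        have h5 : (2:ℝ)^a ≠ 0 := (Real.rpow_pos_of_pos (by norm_num) a).ne'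
        have h6 : (2:ℝ)^s ≠ 0 := (Real.rpow_pos_of_pos (by norm_num) s).ne'
        field_simp

lemma final_arith (a A B K t N0 N1 N δ M : ℝ) (ha : 0 < a) (hA : 0 < A) (hB : 0 < B)
    (hK : 1 ≤ K) (ht : 0 < t) (ht1 : t ≤ 1)
    (hδdef : δ = B*(2*a+1)/(8*(A*a+B))) (hMdef : M = (2*a+1)/(8*a) + 1)
    (hN0 : N0 ≤ K / t) (hN1 : N1 ≤ K / t^2) (hN0' : 0 ≤ N0) (hN1' : 0 ≤ N1)
    (hLB1 : B*(a+1)/4 / t^2 - (A*a+B)/t ≤ N) (hLB2 : A ≤ N) :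
    min (1/(8*K*M)) (A/(K*(A/δ + B/δ^2))) * (A*N0 + B*N1) ≤ N := by
  have hδ : 0 < δ := by rw [hδdef]; positivity
  have hM : 1 ≤ M := by
    have : 0 < (2*a+1)/(8*a) := by positivity
    rw [hMdef]; linarith
  have hM0 : 0 < M := lt_of_lt_of_le one_pos hM
  have hK0 : 0 < K := lt_of_lt_of_le one_pos hK
  have ht2 : (0:ℝ) < t^2 := by positivity
  have hAB : A*N0 + B*N1 ≤ K*(A/t + B/t^2) := by
    have p1 := mul_le_mul_of_nonneg_left hN0 hA.le
    have p2 := mul_le_mul_of_nonneg_left hN1 hB.le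
    have h1 : A * (K/t) = K * (A/t) := by ring
    have h2 : B * (K/t^2) = K * (B/t^2) := by ring
    linarith
  rcases le_or_gt t δ with hc | hc
  · have h8 : 8*(A*a+B)*t ≤ B*(2*a+1) := by
      have := mul_le_mul_of_nonneg_right hc (le_of_lt (by positivity : (0:ℝ) < 8*(A*a+B)))
      calc 8*(A*a+B)*t ≤ δ * (8*(A*a+B)) := by linarith
        _ = B*(2*a+1) := by rw [hδdef]; field_simp
    have hNlb : B/(8*t^2) ≤ N := by
      have key : B/(8*t^2) ≤ B*(a+1)/4 / t^2 - (A*a+B)/t := by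
        rw [div_sub_div _ _ (by positivity : t^2 ≠ 0) (by positivity : t ≠ 0),
          div_le_div_iff₀ (by positivity) (by positivity)]
        nlinarith [mul_le_mul_of_nonneg_right h8 (le_of_lt (pow_pos ht 3))]
      linarith
    have hAt : A*t ≤ B*(2*a+1)/(8*a) := by
      rw [le_div_iff₀ (by positivity)]
      nlinarith [mul_pos hB ht]
    have key2 : A*t + B ≤ M*B := by
      have e : (2*a+1)/(8*a)*B = B*(2*a+1)/(8*a) := by ring
      rw [hMdef]; nlinarith
    have hABle : A/t + B/t^2 ≤ M * (B/t^2) := by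
      have e1 : A/t + B/t^2 = (A*t+B)/t^2 := by field_simp
      have e2 : M*(B/t^2) = (M*B)/t^2 := by ring
      rw [e1, e2, div_le_div_iff₀ ht2 ht2]
      nlinarith [mul_le_mul_of_nonneg_right key2 ht2.le]
    calc min (1/(8*K*M)) (A/(K*(A/δ + B/δ^2))) * (A*N0 + B*N1)
        ≤ 1/(8*K*M) * (K*(M*(B/t^2))) := by
          apply mul_le_mul (min_le_left _ _) _ (by positivity) (by positivity)
          calc A*N0 + B*N1 ≤ K*(A/t + B/t^2) := hAB
            _ ≤ K*(M*(B/t^2)) := mul_le_mul_of_nonneg_left hABle hK0.le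
      _ = B/(8*t^2) := by field_simp
      _ ≤ N := hNlb
  · have hABle : A/t + B/t^2 ≤ A/δ + B/δ^2 := by
      have h1 : A/t ≤ A/δ := div_le_div_of_nonneg_left hA.le hδ hc.le
      have h2 : B/t^2 ≤ B/δ^2 :=
        div_le_div_of_nonneg_left hB.le (by positivity) (pow_le_pow_left₀ hδ.le hc.le 2)
      linarith
    have hden : 0 < K*(A/δ + B/δ^2) := by positivity
    calc min (1/(8*K*M)) (A/(K*(A/δ + B/δ^2))) * (A*N0 + B*N1)
        ≤ A/(K*(A/δ + B/δ^2)) * (K*(A/δ + B/δ^2)) := by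
          apply mul_le_mul (min_le_right _ _) _ (by positivity) (by positivity)
          calc A*N0 + B*N1 ≤ K*(A/t + B/t^2) := hAB
            _ ≤ K*(A/δ + B/δ^2) := mul_le_mul_of_nonneg_left hABle hK0.le
      _ = A := div_mul_cancel₀ A hden.ne'
      _ ≤ N := hLB2

lemma slit_aux {w z : ℂ} (hw : ‖w‖ < 1) (hz : ‖z‖ < 1) :
    (1 - (starRingEnd ℂ) w * z) ∈ Complex.slitPlane := by
  left
  have h1 : ‖((starRingEnd ℂ) w * z)‖ < 1 := by
    rw [norm_mul, Complex.norm_conj]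
    nlinarith [norm_nonneg w, norm_nonneg z]
  have := Complex.re_le_norm ((starRingEnd ℂ) w * z)
  simp only [Complex.sub_re, Complex.one_re]
  linarith

lemma hasDerivAt_aux {w z : ℂ} (hw : ‖w‖ < 1) (hz : ‖z‖ < 1) (s : ℂ) :
    HasDerivAt (fun y => (1 - (starRingEnd ℂ) w * y) ^ (-s))
      (s * (starRingEnd ℂ) w * (1 - (starRingEnd ℂ) w * z) ^ (-s - 1)) z := by
  have hbase : HasDerivAt (fun y => 1 - (starRingEnd ℂ) w * y) (-(starRingEnd ℂ) w) z := by
    have := ((hasDerivAt_id' z).const_mul ((starRingEnd ℂ) w)).const_sub (1:ℂ)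
    rw [mul_one] at this
    exact this
  have := hbase.cpow_const (c := -s) (slit_aux hw hz)
  convert this using 1
  ring

lemma fwi0_eq (α : ℝ) (w : ℂ) : fwi α 0 w = fun z => (1 - (starRingEnd ℂ) w * z) ^ (-(α:ℂ)) := by
  funext z
  simp [fwi, Complex.cpow_neg, one_div]

lemma fwi1_eq (α : ℝ) (w : ℂ) :
    fwi α 1 w = fun z => z * (1 - (starRingEnd ℂ) w * z) ^ (-((α:ℂ)+1)) := by
  funext z
  show z ^ (1:ℕ) / (1 - (starRingEnd ℂ) w * z) ^ ((α:ℂ) + ((1:ℕ):ℂ)) = _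
  rw [Complex.cpow_neg, pow_one, div_eq_mul_inv, Nat.cast_one]

lemma hasDerivAt_fwi0 {w z : ℂ} (hw : ‖w‖ < 1) (hz : ‖z‖ < 1) (α : ℝ) :
    HasDerivAt (fwi α 0 w)
      ((α:ℂ) * (starRingEnd ℂ) w * (1 - (starRingEnd ℂ) w * z) ^ (-(α:ℂ) - 1)) z := by
  rw [fwi0_eq]
  exact hasDerivAt_aux hw hz (α:ℂ)

lemma hasDerivAt_fwi1 {w z : ℂ} (hw : ‖w‖ < 1) (hz : ‖z‖ < 1) (α : ℝ) :
    HasDerivAt (fwi α 1 w)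
      ((1 - (starRingEnd ℂ) w * z) ^ (-((α:ℂ)+1)) +
        z * (((α:ℂ)+1) * (starRingEnd ℂ) w * (1 - (starRingEnd ℂ) w * z) ^ (-((α:ℂ)+1) - 1))) z := by
  rw [fwi1_eq]
  have := (hasDerivAt_id' z).mul (hasDerivAt_aux hw hz ((α:ℂ)+1))
  simp only [one_mul] at this
  exact this

lemma abs_lb1 {w z : ℂ} (hw : ‖w‖ < 1) (hz : ‖z‖ < 1) :
    (1 - ‖z‖ ^ 2)/2 ≤ ‖(1 - (starRingEnd ℂ) w * z)‖ := by
  have h := norm_sub_norm_le (1:ℂ) ((starRingEnd ℂ) w * z)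
  simp only [norm_one, norm_mul, Complex.norm_conj] at h
  nlinarith [norm_nonneg w, norm_nonneg z, sq_nonneg (1 - ‖z‖),
    mul_nonneg (by linarith : (0:ℝ) ≤ 1 - ‖w‖) (norm_nonneg z)]

lemma abs_lb2 {w z : ℂ} (hw : ‖w‖ < 1) (hz : ‖z‖ < 1) :
    (1 - ‖w‖ ^ 2)/2 ≤ ‖(1 - (starRingEnd ℂ) w * z)‖ := by
  have h := norm_sub_norm_le (1:ℂ) ((starRingEnd ℂ) w * z)
  simp only [norm_one, norm_mul, Complex.norm_conj] at h
  nlinarith [norm_nonneg w, norm_nonneg z, sq_nonneg (1 - ‖w‖),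
    mul_nonneg (by linarith : (0:ℝ) ≤ 1 - ‖z‖) (norm_nonneg w)]

lemma ptw0 {α : ℝ} (hα : 0 < α) {w z : ℂ} (hw : ‖w‖ < 1) (hz : ‖z‖ < 1) :
    (1 - ‖z‖ ^ 2)^α *
      ‖((α:ℂ) * (starRingEnd ℂ) w * (1 - (starRingEnd ℂ) w * z) ^ (-(α:ℂ)-1))‖
      ≤ α * (2^(α+1) * (1 - ‖w‖ ^ 2)^(-(1:ℝ))) := by
  have hσ : (0:ℝ) < 1 - ‖z‖ ^ 2 := by nlinarith [norm_nonneg z]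
  have ht : (0:ℝ) < 1 - ‖w‖ ^ 2 := by nlinarith [norm_nonneg w]
  have e : ‖((α:ℂ) * (starRingEnd ℂ) w * (1 - (starRingEnd ℂ) w * z) ^ (-(α:ℂ)-1))‖
      = α * ‖w‖ * ‖(1 - (starRingEnd ℂ) w * z)‖ ^ (-(α+1)) := by
    rw [norm_mul, norm_mul, Complex.norm_conj, Complex.norm_real, Real.norm_eq_abs, abs_of_pos hα,
      show (-(α:ℂ)-1) = ((-(α+1):ℝ):ℂ) by push_cast; ring, Complex.norm_cpow_real]
  rw [e]
  have hest := est hα zero_le_one ht hσ (abs_lb1 hw hz) (abs_lb2 hw hz)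
  have hXnn : (0:ℝ) ≤ (1 - ‖z‖ ^ 2)^α * ‖(1 - (starRingEnd ℂ) w * z)‖ ^ (-(α+1)) :=
    mul_nonneg (Real.rpow_nonneg hσ.le _) (Real.rpow_nonneg (norm_nonneg _) _)
  calc (1 - ‖z‖ ^ 2)^α * (α * ‖w‖ * ‖(1 - (starRingEnd ℂ) w * z)‖ ^ (-(α+1)))
      = (α * ‖w‖) * ((1 - ‖z‖ ^ 2)^α * ‖(1 - (starRingEnd ℂ) w * z)‖ ^ (-(α+1))) := by ring
    _ ≤ (α * 1) * (2^(α+1) * (1 - ‖w‖ ^ 2)^(-(1:ℝ))) := by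
        apply mul_le_mul (by nlinarith [norm_nonneg w]) hest hXnn (by positivity)
    _ = α * (2^(α+1) * (1 - ‖w‖ ^ 2)^(-(1:ℝ))) := by ring

lemma ptw1 {α : ℝ} (hα : 0 < α) {w z : ℂ} (hw : ‖w‖ < 1) (hz : ‖z‖ < 1) :
    (1 - ‖z‖ ^ 2)^α *
      ‖((1 - (starRingEnd ℂ) w * z) ^ (-((α:ℂ)+1)) +
        z * (((α:ℂ)+1) * (starRingEnd ℂ) w * (1 - (starRingEnd ℂ) w * z) ^ (-((α:ℂ)+1) - 1)))‖
      ≤ 2^(α+1) * (1 - ‖w‖ ^ 2)^(-(1:ℝ))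
        + (α+1) * (2^(α+2) * (1 - ‖w‖ ^ 2)^(-(2:ℝ))) := by
  have hσ : (0:ℝ) < 1 - ‖z‖ ^ 2 := by nlinarith [norm_nonneg z]
  have ht : (0:ℝ) < 1 - ‖w‖ ^ 2 := by nlinarith [norm_nonneg w]
  set r := ‖(1 - (starRingEnd ℂ) w * z)‖ with hrdef
  have e1 : ‖((1 - (starRingEnd ℂ) w * z) ^ (-((α:ℂ)+1)))‖ = r ^ (-(α+1)) := by
    rw [show (-((α:ℂ)+1)) = ((-(α+1):ℝ):ℂ) by push_cast; ring, Complex.norm_cpow_real]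
  have e2 : ‖((1 - (starRingEnd ℂ) w * z) ^ (-((α:ℂ)+1) - 1))‖ = r ^ (-(α+2)) := by
    rw [show (-((α:ℂ)+1) - 1) = ((-(α+2):ℝ):ℂ) by push_cast; ring, Complex.norm_cpow_real]
  have habs : ‖((1 - (starRingEnd ℂ) w * z) ^ (-((α:ℂ)+1)) +
        z * (((α:ℂ)+1) * (starRingEnd ℂ) w * (1 - (starRingEnd ℂ) w * z) ^ (-((α:ℂ)+1) - 1)))‖
      ≤ r ^ (-(α+1)) + (α+1) * r ^ (-(α+2)) := by
    refine le_trans (norm_add_le _ _) ?_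
    rw [e1]
    have : ‖(z * (((α:ℂ)+1) * (starRingEnd ℂ) w * (1 - (starRingEnd ℂ) w * z) ^ (-((α:ℂ)+1) - 1)))‖
        = ‖z‖ * ((α+1) * ‖w‖ * r ^ (-(α+2))) := by
      rw [norm_mul, norm_mul, norm_mul, Complex.norm_conj, e2,
        show ‖((α:ℂ)+1)‖ = α+1 by
          rw [show ((α:ℂ)+1) = ((α+1:ℝ):ℂ) by push_cast; ring, Complex.norm_real, Real.norm_eq_abs,
            abs_of_pos (by linarith)]]
    rw [this]
    have hr2nn : (0:ℝ) ≤ r ^ (-(α+2)) := Real.rpow_nonneg (norm_nonneg _) _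
    have hzw : ‖z‖ * ‖w‖ ≤ 1 := by
      nlinarith [norm_nonneg z, norm_nonneg w]
    nlinarith [mul_le_mul_of_nonneg_right hzw
      (mul_nonneg (by linarith : (0:ℝ) ≤ α+1) hr2nn)]
  have hest1 := est hα zero_le_one ht hσ (abs_lb1 hw hz) (abs_lb2 hw hz)
  have hest2 := est hα (by norm_num : (0:ℝ) ≤ 2) ht hσ (abs_lb1 hw hz) (abs_lb2 hw hz)
  have hσα : (0:ℝ) ≤ (1 - ‖z‖ ^ 2)^α := Real.rpow_nonneg hσ.le _
  calc (1 - ‖z‖ ^ 2)^α * ‖_‖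
      ≤ (1 - ‖z‖ ^ 2)^α * (r ^ (-(α+1)) + (α+1) * r ^ (-(α+2))) :=
        mul_le_mul_of_nonneg_left habs hσα
    _ = (1 - ‖z‖ ^ 2)^α * r ^ (-(α+1))
        + (α+1) * ((1 - ‖z‖ ^ 2)^α * r ^ (-(α+2))) := by ring
    _ ≤ 2^(α+1) * (1 - ‖w‖ ^ 2)^(-(1:ℝ))
        + (α+1) * (2^(α+2) * (1 - ‖w‖ ^ 2)^(-(2:ℝ))) := by
        have := mul_le_mul_of_nonneg_left hest2 (by linarith : (0:ℝ) ≤ α+1)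
        linarith

lemma bSemi_props {α : ℝ} (f : ℂ → ℂ) (C : ℝ)
    (h : ∀ z : UDisk, (1 - ‖(z:ℂ)‖ ^ 2)^α * ‖(deriv f (z:ℂ))‖ ≤ C) :
    bSemi α f ≤ C ∧ 0 ≤ bSemi α f ∧
      ∀ z : UDisk, (1 - ‖(z:ℂ)‖ ^ 2)^α * ‖(deriv f (z:ℂ))‖ ≤ bSemi α f := by
  have hb : BddAbove (Set.range fun z : UDisk =>
      (1 - ‖(z:ℂ)‖ ^ 2)^α * ‖(deriv f (z:ℂ))‖) :=
    ⟨C, by rintro x ⟨z, rfl⟩; exact h z⟩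
  refine ⟨ciSup_le h, ?_, fun z => le_ciSup hb z⟩
  have h0 : ((⟨0, by simp [UDisk]⟩ : UDisk) : ℂ) = 0 := rfl
  refine le_trans ?_ (le_ciSup hb ⟨0, by simp [UDisk]⟩)
  exact mul_nonneg (Real.rpow_nonneg (by rw [h0]; simp) _) (norm_nonneg _)

set_option maxHeartbeats 2000000 in
theorem stmt6 (α : ℝ) (hα : 0 < α) (c₀ c₁ : ℂ) (h0 : c₀ ≠ 0) (h1 : c₁ ≠ 0) :
    ∃ c > 0, ∀ w ∈ UDisk, 1 / 2 < ‖w‖ →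
      c * (‖c₀‖ * bNorm α (fwi α 0 w) + ‖c₁‖ * bNorm α (fwi α 1 w)) ≤
        bNorm α (fun z => c₀ * fwi α 0 w z + c₁ * fwi α 1 w z) := by
  obtain ⟨A, hAdef⟩ : ∃ A, A = ‖c₀‖ := ⟨_, rfl⟩
  obtain ⟨B, hBdef⟩ : ∃ B, B = ‖c₁‖ := ⟨_, rfl⟩
  have hA : 0 < A := hAdef ▸ norm_pos_iff.mpr h0
  have hB : 0 < B := hBdef ▸ norm_pos_iff.mpr h1
  obtain ⟨K, hKdef⟩ : ∃ K : ℝ, K = 1 + (α+2) * 2^(α+2) := ⟨_, rfl⟩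
  have h2p : (0:ℝ) < 2^(α+2) := Real.rpow_pos_of_pos (by norm_num) _
  have hK : 1 ≤ K := by rw [hKdef]; nlinarith
  have hK0 : 0 < K := lt_of_lt_of_le one_pos hK
  obtain ⟨δ, hδdef⟩ : ∃ δ : ℝ, δ = B*(2*α+1)/(8*(A*α+B)) := ⟨_, rfl⟩
  have hδ : 0 < δ := by
    rw [hδdef]
    apply div_pos (mul_pos hB (by linarith))
    nlinarith [mul_pos hA hα]
  obtain ⟨M, hMdef⟩ : ∃ M : ℝ, M = (2*α+1)/(8*α) + 1 := ⟨_, rfl⟩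
  have hM0 : 0 < M := by
    have : 0 < (2*α+1)/(8*α) := by positivity
    rw [hMdef]; linarith
  refine ⟨min (1/(8*K*M)) (A/(K*(A/δ + B/δ^2))), ?_, ?_⟩
  · apply lt_min
    · positivity
    · exact div_pos hA (mul_pos hK0 (by positivity))
  intro w hwD hw2
  rw [mem_UDisk] at hwD
  obtain ⟨t, htdef⟩ : ∃ t : ℝ, t = 1 - ‖w‖ ^ 2 := ⟨_, rfl⟩
  have ht : 0 < t := by rw [htdef]; nlinarith [norm_nonneg w]
  have ht1 : t ≤ 1 := by rw [htdef]; nlinarith [norm_nonneg w]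
  have ht1' : (1:ℝ)/t ≤ 1/t^2 := by
    rw [div_le_div_iff₀ ht (by positivity)]
    nlinarith
  have hinv : t^(-(1:ℝ)) = 1/t := by rw [Real.rpow_neg_one]; exact (one_div t).symm
  have hinv2 : t^(-(2:ℝ)) = 1/t^2 := by
    rw [show (-(2:ℝ)) = ((-2 : ℤ) : ℝ) by norm_num, Real.rpow_intCast, zpow_neg]
    norm_num
  have h21 : (2:ℝ)^(α+1) ≤ 2^(α+2) :=
    Real.rpow_le_rpow_of_exponent_le one_le_two (by linarith)
  have h1p : (0:ℝ) < 2^(α+1) := Real.rpow_pos_of_pos (by norm_num) _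
  -- upper bound for N0
  have hs0 := bSemi_props (α := α) (fwi α 0 w) (α * (2^(α+1) * t^(-(1:ℝ))))
    (fun z => by
      have hz : ‖(z:ℂ)‖ < 1 := mem_UDisk.mp z.2
      rw [(hasDerivAt_fwi0 hwD hz α).deriv, htdef]
      exact ptw0 hα hwD hz)
  have hf00 : fwi α 0 w 0 = 1 := by simp [fwi]
  have hN0 : bNorm α (fwi α 0 w) ≤ K/t := by
    rw [bNorm, hf00]
    have h1t : 1 ≤ 1/t := by rw [le_div_iff₀ ht]; linarith
    have : α * (2^(α+1) * t^(-(1:ℝ))) = α * 2^(α+1) * (1/t) := by rw [hinv]; ring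
    rw [this] at hs0
    have hKt : K/t = K * (1/t) := by ring
    rw [hKt, hKdef]
    have hcoef : α * 2^(α+1) + 1 ≤ 1 + (α+2) * 2^(α+2) := by nlinarith
    simp only [norm_one]
    nlinarith [hs0.1, mul_le_mul_of_nonneg_right hcoef (by positivity : (0:ℝ) ≤ 1/t)]
  -- upper bound for N1
  have hs1 := bSemi_props (α := α) (fwi α 1 w)
    (2^(α+1) * t^(-(1:ℝ)) + (α+1) * (2^(α+2) * t^(-(2:ℝ))))
    (fun z => by
      have hz : ‖(z:ℂ)‖ < 1 := mem_UDisk.mp z.2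
      rw [(hasDerivAt_fwi1 hwD hz α).deriv, htdef]
      exact ptw1 hα hwD hz)
  have hf10 : fwi α 1 w 0 = 0 := by simp [fwi]
  have hN1 : bNorm α (fwi α 1 w) ≤ K/t^2 := by
    rw [bNorm, hf10]
    have : 2^(α+1) * t^(-(1:ℝ)) + (α+1) * (2^(α+2) * t^(-(2:ℝ)))
        = 2^(α+1) * (1/t) + (α+1) * 2^(α+2) * (1/t^2) := by rw [hinv, hinv2]; ring
    rw [this] at hs1
    have hKt : K/t^2 = K * (1/t^2) := by ring
    rw [hKt, hKdef]
    simp only [norm_zero]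
    have hcoef : 2^(α+1) + (α+1) * 2^(α+2) ≤ 1 + (α+2) * 2^(α+2) := by nlinarith
    nlinarith [hs1.1, mul_le_mul_of_nonneg_right hcoef (by positivity : (0:ℝ) ≤ 1/t^2),
      mul_le_mul_of_nonneg_left ht1' (by positivity : (0:ℝ) ≤ 2^(α+1))]
  -- nonnegativity
  have hN0' : 0 ≤ bNorm α (fwi α 0 w) := by
    rw [bNorm]; have := hs0.2.1; positivity
  have hN1' : 0 ≤ bNorm α (fwi α 1 w) := by
    rw [bNorm]; have := hs1.2.1; positivity
  -- lower bounds for the combination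
  obtain ⟨h, hhdef⟩ : ∃ h : ℂ → ℂ, h = fun z => c₀ * fwi α 0 w z + c₁ * fwi α 1 w z := ⟨_, rfl⟩
  rw [show (fun z => c₀ * fwi α 0 w z + c₁ * fwi α 1 w z) = h from hhdef.symm,
    show ‖c₀‖ = A from hAdef.symm, show ‖c₁‖ = B from hBdef.symm]
  obtain ⟨T1, hT1def⟩ : ∃ T1 : ℝ, T1 = t^(-(α+1)) := ⟨_, rfl⟩
  obtain ⟨T2, hT2def⟩ : ∃ T2 : ℝ, T2 = t^(-(α+2)) := ⟨_, rfl⟩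
  have hT1p : 0 < T1 := hT1def ▸ Real.rpow_pos_of_pos ht _
  have hT2p : 0 < T2 := hT2def ▸ Real.rpow_pos_of_pos ht _
  have hu : 1 - (starRingEnd ℂ) w * w = ((t:ℝ):ℂ) := by
    rw [htdef, mul_comm, Complex.mul_conj, ← Complex.sq_norm]
    push_cast
    ring
  have hcpow1 : ((t:ℝ):ℂ) ^ (-(α:ℂ)-1) = ((T1:ℝ):ℂ) := by
    rw [show (-(α:ℂ)-1) = ((-(α+1):ℝ):ℂ) by push_cast; ring, ← Complex.ofReal_cpow ht.le,
      hT1def]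
  have hcpow1' : ((t:ℝ):ℂ) ^ (-((α:ℂ)+1)) = ((T1:ℝ):ℂ) := by
    rw [show (-((α:ℂ)+1)) = ((-(α+1):ℝ):ℂ) by push_cast; ring, ← Complex.ofReal_cpow ht.le,
      hT1def]
  have hcpow2 : ((t:ℝ):ℂ) ^ (-((α:ℂ)+1)-1) = ((T2:ℝ):ℂ) := by
    rw [show (-((α:ℂ)+1)-1) = ((-(α+2):ℝ):ℂ) by push_cast; ring, ← Complex.ofReal_cpow ht.le,
      hT2def]
  have hww : w * (starRingEnd ℂ) w = ((‖w‖ ^ 2 : ℝ):ℂ) := by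
    rw [Complex.mul_conj, ← Complex.sq_norm]
  have hderivh : HasDerivAt h
      (c₀ * ((α:ℂ) * (starRingEnd ℂ) w * (1 - (starRingEnd ℂ) w * w) ^ (-(α:ℂ)-1)) +
        c₁ * ((1 - (starRingEnd ℂ) w * w) ^ (-((α:ℂ)+1)) +
          w * (((α:ℂ)+1) * (starRingEnd ℂ) w * (1 - (starRingEnd ℂ) w * w) ^ (-((α:ℂ)+1) - 1)))) w := by
    rw [hhdef]
    exact ((hasDerivAt_fwi0 hwD hwD α).const_mul c₀).add
      ((hasDerivAt_fwi1 hwD hwD α).const_mul c₁)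
  have hexpr : c₀ * ((α:ℂ) * (starRingEnd ℂ) w * (1 - (starRingEnd ℂ) w * w) ^ (-(α:ℂ)-1)) +
        c₁ * ((1 - (starRingEnd ℂ) w * w) ^ (-((α:ℂ)+1)) +
          w * (((α:ℂ)+1) * (starRingEnd ℂ) w * (1 - (starRingEnd ℂ) w * w) ^ (-((α:ℂ)+1) - 1)))
      = c₁ * ((α:ℂ)+1) * ((‖w‖ ^ 2 : ℝ):ℂ) * ((T2:ℝ):ℂ)
        + (c₀ * (α:ℂ) * (starRingEnd ℂ) w * ((T1:ℝ):ℂ) + c₁ * ((T1:ℝ):ℂ)) := by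
    rw [hu, hcpow1, hcpow1', hcpow2]
    linear_combination c₁ * (((α:ℂ)+1)) * ((T2:ℝ):ℂ) * hww
  have habsX : ‖(c₁ * ((α:ℂ)+1) * ((‖w‖ ^ 2 : ℝ):ℂ) * ((T2:ℝ):ℂ))‖
      = B * (α+1) * (‖w‖ ^ 2) * T2 := by
    rw [show ((α:ℂ)+1) = ((α+1:ℝ):ℂ) by push_cast; ring]
    rw [norm_mul, norm_mul, norm_mul, Complex.norm_real, Real.norm_eq_abs, Complex.norm_real, Real.norm_eq_abs, Complex.norm_real, Real.norm_eq_abs]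
    rw [abs_of_pos (show (0:ℝ) < α+1 by linarith), _root_.abs_of_nonneg (sq_nonneg (‖w‖)),
      abs_of_pos hT2p, hBdef]
  have habsY : ‖(c₀ * (α:ℂ) * (starRingEnd ℂ) w * ((T1:ℝ):ℂ) + c₁ * ((T1:ℝ):ℂ))‖
      ≤ (A*α + B) * T1 := by
    refine le_trans (norm_add_le _ _) ?_
    rw [norm_mul, norm_mul, norm_mul, norm_mul, Complex.norm_conj, Complex.norm_real, Real.norm_eq_abs,
      Complex.norm_real, Real.norm_eq_abs, abs_of_pos hT1p, abs_of_pos hα,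
      show ‖c₀‖ = A from hAdef.symm, show ‖c₁‖ = B from hBdef.symm]
    nlinarith [mul_nonneg (mul_nonneg (mul_pos hA hα).le hT1p.le)
      (show (0:ℝ) ≤ 1 - ‖w‖ by linarith)]
  have hderiv_lb : B*(α+1)*(‖w‖ ^ 2)*T2 - (A*α+B)*T1 ≤ ‖(deriv h w)‖ := by
    rw [hderivh.deriv, hexpr]
    calc B*(α+1)*(‖w‖ ^ 2)*T2 - (A*α+B)*T1
        ≤ ‖(c₁ * ((α:ℂ)+1) * ((‖w‖ ^ 2 : ℝ):ℂ) * ((T2:ℝ):ℂ))‖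
          - ‖(c₀ * (α:ℂ) * (starRingEnd ℂ) w * ((T1:ℝ):ℂ) + c₁ * ((T1:ℝ):ℂ))‖ := by
          rw [habsX]; linarith
      _ ≤ _ := by
          have hns := norm_sub_norm_le
            (c₁ * ((α:ℂ)+1) * ((‖w‖ ^ 2 : ℝ):ℂ) * ((T2:ℝ):ℂ))
            (c₁ * ((α:ℂ)+1) * ((‖w‖ ^ 2 : ℝ):ℂ) * ((T2:ℝ):ℂ)
              + (c₀ * (α:ℂ) * (starRingEnd ℂ) w * ((T1:ℝ):ℂ) + c₁ * ((T1:ℝ):ℂ)))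
          rw [show c₁ * ((α:ℂ)+1) * ((‖w‖ ^ 2 : ℝ):ℂ) * ((T2:ℝ):ℂ)
              - (c₁ * ((α:ℂ)+1) * ((‖w‖ ^ 2 : ℝ):ℂ) * ((T2:ℝ):ℂ)
                + (c₀ * (α:ℂ) * (starRingEnd ℂ) w * ((T1:ℝ):ℂ) + c₁ * ((T1:ℝ):ℂ)))
              = -(c₀ * (α:ℂ) * (starRingEnd ℂ) w * ((T1:ℝ):ℂ) + c₁ * ((T1:ℝ):ℂ)) by ring,
            norm_neg] at hns
          linarith
  have htT1 : t^α * T1 = 1/t := by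
    rw [hT1def, ← Real.rpow_add ht, show α + -(α+1) = -(1:ℝ) by ring, Real.rpow_neg_one]
    exact (one_div t).symm
  have htT2 : t^α * T2 = 1/t^2 := by
    rw [hT2def, ← Real.rpow_add ht, show α + -(α+2) = ((-2:ℤ):ℝ) by norm_num,
      Real.rpow_intCast, zpow_neg]
    norm_num
  -- the function value at w as element of the sup
  have hCb : ∀ z : UDisk, (1 - ‖(z:ℂ)‖ ^ 2)^α * ‖(deriv h (z:ℂ))‖
      ≤ A * (α * (2^(α+1) * t^(-(1:ℝ))))
        + B * (2^(α+1) * t^(-(1:ℝ)) + (α+1) * (2^(α+2) * t^(-(2:ℝ)))) := by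
    intro z
    have hz : ‖(z:ℂ)‖ < 1 := mem_UDisk.mp z.2
    have hd : HasDerivAt h
        (c₀ * ((α:ℂ) * (starRingEnd ℂ) w * (1 - (starRingEnd ℂ) w * (z:ℂ)) ^ (-(α:ℂ)-1)) +
          c₁ * ((1 - (starRingEnd ℂ) w * (z:ℂ)) ^ (-((α:ℂ)+1)) +
            (z:ℂ) * (((α:ℂ)+1) * (starRingEnd ℂ) w * (1 - (starRingEnd ℂ) w * (z:ℂ)) ^ (-((α:ℂ)+1) - 1)))) (z:ℂ) := by
      rw [hhdef]
      exact ((hasDerivAt_fwi0 hwD hz α).const_mul c₀).add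
        ((hasDerivAt_fwi1 hwD hz α).const_mul c₁)
    rw [hd.deriv]
    have hσα : (0:ℝ) ≤ (1 - ‖(z:ℂ)‖ ^ 2)^α :=
      Real.rpow_nonneg (by nlinarith [norm_nonneg (z:ℂ), hz] : (0:ℝ) ≤ 1 - ‖(z:ℂ)‖^2) _
    calc (1 - ‖(z:ℂ)‖ ^ 2)^α * ‖_‖
        ≤ (1 - ‖(z:ℂ)‖ ^ 2)^α *
            (‖c₀‖ * ‖((α:ℂ) * (starRingEnd ℂ) w * (1 - (starRingEnd ℂ) w * (z:ℂ)) ^ (-(α:ℂ)-1))‖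
            + ‖c₁‖ * ‖((1 - (starRingEnd ℂ) w * (z:ℂ)) ^ (-((α:ℂ)+1)) +
              (z:ℂ) * (((α:ℂ)+1) * (starRingEnd ℂ) w * (1 - (starRingEnd ℂ) w * (z:ℂ)) ^ (-((α:ℂ)+1) - 1)))‖) := by
          apply mul_le_mul_of_nonneg_left _ hσα
          refine le_trans (norm_add_le _ _) ?_
          rw [norm_mul c₀, norm_mul c₁]
      _ = A * ((1 - ‖(z:ℂ)‖ ^ 2)^α * ‖((α:ℂ) * (starRingEnd ℂ) w * (1 - (starRingEnd ℂ) w * (z:ℂ)) ^ (-(α:ℂ)-1))‖)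
          + B * ((1 - ‖(z:ℂ)‖ ^ 2)^α * ‖((1 - (starRingEnd ℂ) w * (z:ℂ)) ^ (-((α:ℂ)+1)) +
              (z:ℂ) * (((α:ℂ)+1) * (starRingEnd ℂ) w * (1 - (starRingEnd ℂ) w * (z:ℂ)) ^ (-((α:ℂ)+1) - 1)))‖) := by
          rw [hAdef, hBdef]; ring
      _ ≤ _ := by
          have p0 := ptw0 hα hwD hz
          have p1 := ptw1 hα hwD hz
          rw [← htdef] at p0 p1
          have := mul_le_mul_of_nonneg_left p0 hA.le
          have := mul_le_mul_of_nonneg_left p1 hB.le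
          linarith
  have hsh := bSemi_props (α := α) h _ hCb
  have hwU : w ∈ UDisk := mem_UDisk.mpr hwD
  have helem := hsh.2.2 ⟨w, hwU⟩
  have hh0 : h 0 = c₀ := by rw [hhdef]; simp only [hf00, hf10]; ring
  have hw2sq : (1:ℝ)/4 ≤ ‖w‖ ^ 2 := by nlinarith
  have hLB1 : B*(α+1)/4 / t^2 - (A*α+B)/t ≤ bNorm α h := by
    have hterm : B*(α+1)/4 / t^2 - (A*α+B)/t
        ≤ (1 - ‖w‖ ^ 2)^α * ‖(deriv h w)‖ := by
      have step : B*(α+1)/4 / t^2 - (A*α+B)/t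
          ≤ t^α * (B*(α+1)*(‖w‖ ^ 2)*T2 - (A*α+B)*T1) := by
        have e : t^α * (B*(α+1)*(‖w‖ ^ 2)*T2 - (A*α+B)*T1)
            = B*(α+1)*(‖w‖ ^ 2)*(t^α*T2) - (A*α+B)*(t^α*T1) := by ring
        rw [e, htT1, htT2]
        have : B*(α+1)/4 * (1/t^2) ≤ B*(α+1)*(‖w‖ ^ 2)*(1/t^2) := by
          apply mul_le_mul_of_nonneg_right _ (by positivity)
          nlinarith [hw2sq, mul_pos hB (show (0:ℝ) < α+1 by linarith)]
        have e2 : B*(α+1)/4 / t^2 = B*(α+1)/4 * (1/t^2) := by ring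
        have e3 : (A*α+B)/t = (A*α+B)*(1/t) := by ring
        rw [e2, e3]
        linarith
      refine le_trans step ?_
      have := mul_le_mul_of_nonneg_left hderiv_lb (Real.rpow_nonneg ht.le α)
      rw [← htdef]
      linarith
    rw [bNorm]
    have := hsh.2.1
    calc B*(α+1)/4 / t^2 - (A*α+B)/t
        ≤ (1 - ‖w‖ ^ 2)^α * ‖(deriv h w)‖ := hterm
      _ ≤ bSemi α h := by
          have : ((⟨w, hwU⟩ : UDisk) : ℂ) = w := rfl
          rw [← this]
          exact hsh.2.2 ⟨w, hwU⟩
      _ ≤ ‖(h 0)‖ + bSemi α h :=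
          le_add_of_nonneg_left (norm_nonneg _)
  have hLB2 : A ≤ bNorm α h := by
    rw [bNorm, hh0, show ‖c₀‖ = A from hAdef.symm]
    linarith [hsh.2.1]
  exact final_arith α A B K t (bNorm α (fwi α 0 w)) (bNorm α (fwi α 1 w)) (bNorm α h) δ M
    hα hA hB hK ht ht1 hδdef hMdef hN0 hN1 hN0' hN1' hLB1 hLB2
end
end

section
/- Let α > 1, β > 0, integer n ≥ 1, and g analytic on D. Then I_g^{n,0} f = I^n(f g) is bounded from B^α to B^β if and only if sup_{z∈D} (1-|z|²)^{n+β-α} |g(z)| < ∞. -/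
open Complex Metric Filter Topology

noncomputable section

lemma zero_mem_UDisk : (0 : ℂ) ∈ UDisk := by simp [mem_UDisk]

instance : Nonempty UDisk := ⟨⟨0, zero_mem_UDisk⟩⟩

lemma isOpen_UDisk : IsOpen UDisk := isOpen_ball

lemma oneSubAbs_pos {z : ℂ} (hz : z ∈ UDisk) : 0 < 1 - ‖z‖ :=
  sub_pos.2 (mem_UDisk.1 hz)

lemma oneSubSq_pos {z : ℂ} (hz : z ∈ UDisk) : 0 < 1 - ‖z‖ ^ 2 := by
  have h := mem_UDisk.1 hz
  nlinarith [norm_nonneg z]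

lemma oneSubAbs_le_oneSubSq {z : ℂ} (hz : z ∈ UDisk) :
    1 - ‖z‖ ≤ 1 - ‖z‖ ^ 2 := by
  have h := mem_UDisk.1 hz
  nlinarith [norm_nonneg z]

lemma oneSubSq_le_two_oneSubAbs {z : ℂ} (hz : z ∈ UDisk) :
    1 - ‖z‖ ^ 2 ≤ 2 * (1 - ‖z‖) := by
  have h := mem_UDisk.1 hz
  nlinarith [norm_nonneg z]

/-- `(1-|z|²)^e ≤ 2^|e| (1-|z|)^e` for `z` in the disk. -/
lemma oneSubSq_rpow_le {z : ℂ} (hz : z ∈ UDisk) (e : ℝ) :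
    (1 - ‖z‖ ^ 2) ^ e ≤ 2 ^ |e| * (1 - ‖z‖) ^ e := by
  have h1 := oneSubAbs_pos hz
  have h2 := oneSubSq_pos hz
  rcases le_or_gt 0 e with he | he
  · rw [_root_.abs_of_nonneg he]
    calc (1 - ‖z‖ ^ 2) ^ e ≤ (2 * (1 - ‖z‖)) ^ e :=
          Real.rpow_le_rpow h2.le (oneSubSq_le_two_oneSubAbs hz) he
      _ = 2 ^ e * (1 - ‖z‖) ^ e := Real.mul_rpow (by norm_num) h1.le
  · rw [_root_.abs_of_nonpos he.le]
    have : (1 - ‖z‖ ^ 2) ^ e ≤ (1 - ‖z‖) ^ e :=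
      Real.rpow_le_rpow_of_nonpos h1 (oneSubAbs_le_oneSubSq hz) he.le
    have h2e : (1:ℝ) ≤ 2 ^ (-e) := Real.one_le_rpow (by norm_num) (by linarith)
    nlinarith [Real.rpow_nonneg h1.le e, Real.rpow_nonneg (by positivity : (0:ℝ) ≤ 1 - ‖z‖ ^ 2) e]

/-- `(1-|z|)^e ≤ 2^|e| (1-|z|²)^e` for `z` in the disk. -/
lemma oneSubAbs_rpow_le {z : ℂ} (hz : z ∈ UDisk) (e : ℝ) :
    (1 - ‖z‖) ^ e ≤ 2 ^ |e| * (1 - ‖z‖ ^ 2) ^ e := by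
  have h1 := oneSubAbs_pos hz
  have h2 := oneSubSq_pos hz
  rcases le_or_gt 0 e with he | he
  · rw [_root_.abs_of_nonneg he]
    have : (1 - ‖z‖) ^ e ≤ (1 - ‖z‖ ^ 2) ^ e :=
      Real.rpow_le_rpow h1.le (oneSubAbs_le_oneSubSq hz) he
    have h2e : (1:ℝ) ≤ 2 ^ e := Real.one_le_rpow (by norm_num) he
    nlinarith [Real.rpow_nonneg h1.le e, Real.rpow_nonneg h2.le e]
  · rw [_root_.abs_of_nonpos he.le]
    have hhalf : (1 - ‖z‖ ^ 2) / 2 ≤ 1 - ‖z‖ := by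
      linarith [oneSubSq_le_two_oneSubAbs hz]
    calc (1 - ‖z‖) ^ e ≤ ((1 - ‖z‖ ^ 2) / 2) ^ e :=
          Real.rpow_le_rpow_of_nonpos (by positivity) hhalf he.le
      _ = (1 - ‖z‖ ^ 2) ^ e / 2 ^ e := Real.div_rpow h2.le (by norm_num : (0:ℝ) ≤ 2) e
      _ = 2 ^ (-e) * (1 - ‖z‖ ^ 2) ^ e := by
          rw [Real.rpow_neg (by norm_num)]; ring

/-! ### Analyticity facts -/

lemma diffOn_deriv {h : ℂ → ℂ} (hh : DifferentiableOn ℂ h UDisk) :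
    DifferentiableOn ℂ (deriv h) UDisk :=
  ((hh.analyticOnNhd isOpen_UDisk).deriv).differentiableOn

lemma scaled_mem {z : ℂ} (hz : z ∈ UDisk) {t : ℝ} (ht0 : 0 ≤ t) (ht1 : t ≤ 1) :
    (t : ℂ) * z ∈ UDisk := by
  rw [mem_UDisk] at *
  rw [norm_mul, Complex.norm_real, Real.norm_eq_abs, _root_.abs_of_nonneg ht0]
  calc t * ‖z‖ ≤ 1 * ‖z‖ := by
        exact mul_le_mul_of_nonneg_right ht1 (norm_nonneg z)
    _ < 1 := by simpa using hz

lemma contOn_comp_scale {h : ℂ → ℂ} (hh : ContinuousOn h UDisk) {z : ℂ} (hz : z ∈ UDisk) :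
    ContinuousOn (fun t : ℝ => h ((t : ℂ) * z)) (Set.Icc 0 1) := by
  apply hh.comp (Continuous.continuousOn (by continuity))
  exact fun t ht => scaled_mem hz ht.1 ht.2

lemma hasDerivAt_comp_scale {h : ℂ → ℂ} (hh : DifferentiableOn ℂ h UDisk) {z : ℂ}
    (hz : z ∈ UDisk) {t : ℝ} (ht0 : 0 ≤ t) (ht1 : t ≤ 1) :
    HasDerivAt (fun s : ℝ => h ((s : ℂ) * z)) (z * deriv h ((t : ℂ) * z)) t := by
  have hmem : (t : ℂ) * z ∈ UDisk := scaled_mem hz ht0 ht1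
  have hd : HasDerivAt h (deriv h ((t : ℂ) * z)) ((t : ℂ) * z) :=
    (hh.differentiableAt (isOpen_UDisk.mem_nhds hmem)).hasDerivAt
  have hf : HasDerivAt (fun s : ℝ => (s : ℂ) * z) z t := by
    simpa using (Complex.ofRealCLM.hasDerivAt (x := t)).mul_const z
  have := HasDerivAt.scomp (𝕜 := ℝ) (𝕜' := ℂ) t hd hf
  simpa [smul_eq_mul, mul_comm, Function.comp_def] using this

/-- FTC along the segment from `0` to `z`. -/
lemma ftc_scale {h : ℂ → ℂ} (hh : DifferentiableOn ℂ h UDisk) {z : ℂ} (hz : z ∈ UDisk) :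
    (∫ t in (0:ℝ)..1, (h ((t:ℂ)*z) + (t:ℂ) * (z * deriv h ((t:ℂ)*z)))) = h z := by
  have hderiv : ∀ t ∈ Set.uIcc (0:ℝ) 1,
      HasDerivAt (fun s : ℝ => (s:ℂ) * h ((s:ℂ)*z))
        (h ((t:ℂ)*z) + (t:ℂ) * (z * deriv h ((t:ℂ)*z))) t := by
    intro t ht
    rw [Set.uIcc_of_le zero_le_one] at ht
    have h1 : HasDerivAt (fun s : ℝ => ((s:ℝ):ℂ)) 1 t := by
      exact Complex.ofRealCLM.hasDerivAt (x := t)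
    have h2 := hasDerivAt_comp_scale hh hz ht.1 ht.2
    have h3 := h1.mul h2
    rw [one_mul] at h3
    exact h3
  have hcont : ContinuousOn
      (fun t : ℝ => h ((t:ℂ)*z) + (t:ℂ) * (z * deriv h ((t:ℂ)*z))) (Set.Icc 0 1) := by
    apply (contOn_comp_scale hh.continuousOn hz).add
    exact (Complex.continuous_ofReal.continuousOn).mul
      ((contOn_comp_scale (diffOn_deriv hh).continuousOn hz).const_smul z)
  have hint : IntervalIntegrable
      (fun t : ℝ => h ((t:ℂ)*z) + (t:ℂ) * (z * deriv h ((t:ℂ)*z)))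
      MeasureTheory.volume 0 1 := by
    apply ContinuousOn.intervalIntegrable
    rwa [Set.uIcc_of_le zero_le_one]
  have := intervalIntegral.integral_eq_sub_of_hasDerivAt hderiv hint
  simpa using this

lemma aesm_scale {h : ℂ → ℂ} (hh : ContinuousOn h UDisk) {x : ℂ} (hx : x ∈ UDisk) :
    MeasureTheory.AEStronglyMeasurable (fun t : ℝ => h ((t:ℂ)*x))
      (MeasureTheory.volume.restrict (Set.uIoc (0:ℝ) 1)) := by
  rw [Set.uIoc_of_le zero_le_one]
  exact ((contOn_comp_scale hh hx).mono Set.Ioc_subset_Icc_self).aestronglyMeasurable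
    measurableSet_Ioc

lemma intervalIntegrable_scale {h : ℂ → ℂ} (hh : ContinuousOn h UDisk) {x : ℂ}
    (hx : x ∈ UDisk) :
    IntervalIntegrable (fun t : ℝ => h ((t:ℂ)*x)) MeasureTheory.volume 0 1 := by
  apply ContinuousOn.intervalIntegrable
  rw [Set.uIcc_of_le zero_le_one]
  exact contOn_comp_scale hh hx

/-- The fundamental lemma: `intOp h` is a primitive of `h` on the disk. -/
lemma hasDerivAt_intOp {h : ℂ → ℂ} (hh : DifferentiableOn ℂ h UDisk) {z : ℂ}
    (hz : z ∈ UDisk) : HasDerivAt (intOp h) (h z) z := by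
  set r : ℝ := (1 + ‖z‖) / 2 with hr
  have hzr : ‖z‖ < r := by
    have := mem_UDisk.1 hz; rw [hr]; linarith
  have hr1 : r < 1 := by
    have := mem_UDisk.1 hz; rw [hr]; linarith
  have hrpos : 0 < r := lt_of_le_of_lt (norm_nonneg z) hzr
  set ε : ℝ := r - ‖z‖ with hε
  have hεpos : 0 < ε := sub_pos.2 hzr
  -- all scaled points from the ball stay in `closedBall 0 r`
  have hball : ∀ x ∈ ball z ε, ∀ t : ℝ, t ∈ Set.uIoc (0:ℝ) 1 → (t:ℂ)*x ∈ closedBall (0:ℂ) r := by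
    intro x hx t ht
    rw [Set.uIoc_of_le zero_le_one] at ht
    have hxr : ‖x‖ < r := by
      have := mem_ball_iff_norm.1 hx
      calc ‖x‖ = ‖x - z + z‖ := by rw [sub_add_cancel]
        _ ≤ ‖x - z‖ + ‖z‖ := norm_add_le _ _
        _ < ε + ‖z‖ := by linarith
        _ = r := by rw [hε]; ring
    rw [mem_closedBall_zero_iff]
    calc ‖(t:ℂ)*x‖ = |t| * ‖x‖ := by
          rw [norm_mul, Complex.norm_real, Real.norm_eq_abs]
      _ ≤ 1 * r := by
          apply mul_le_mul (abs_le.2 ⟨by linarith [ht.1], ht.2⟩) hxr.le (norm_nonneg x)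
          norm_num
      _ = r := one_mul r
  have hball_mem : ∀ x ∈ ball z ε, x ∈ UDisk := by
    intro x hx
    have := hball x hx 1 (by rw [Set.uIoc_of_le zero_le_one]; exact ⟨zero_lt_one, le_refl 1⟩)
    simp only [Complex.ofReal_one, one_mul] at this
    exact mem_UDisk.2 (lt_of_le_of_lt (mem_closedBall_zero_iff.1 this) hr1)
  have hsub : closedBall (0:ℂ) r ⊆ UDisk := by
    intro w hw
    exact mem_UDisk.2 (lt_of_le_of_lt (mem_closedBall_zero_iff.1 hw) hr1)
  -- bound for deriv h on the compact closed ball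
  obtain ⟨M, hM⟩ := (isCompact_closedBall (0:ℂ) r).exists_bound_of_continuousOn
    ((diffOn_deriv hh).continuousOn.mono hsub)
  -- derivative of the parametric integral
  have key := intervalIntegral.hasDerivAt_integral_of_dominated_loc_of_deriv_le
    (F := fun x (t:ℝ) => h ((t:ℂ)*x)) (F' := fun x (t:ℝ) => (t:ℂ) * deriv h ((t:ℂ)*x))
    (x₀ := z) (a := 0) (b := 1) (bound := fun _ => M) (μ := MeasureTheory.volume) (ball_mem_nhds z hεpos)
    ?_ ?_ ?_ ?_ ?_ ?_
  · obtain ⟨-, hG⟩ := key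
    have hmain : HasDerivAt (fun x => x * ∫ t in (0:ℝ)..1, h ((t:ℂ)*x))
        ((1 : ℂ) * (∫ t in (0:ℝ)..1, h ((t:ℂ)*z)) +
          z * ∫ t in (0:ℝ)..1, (t:ℂ) * deriv h ((t:ℂ)*z)) z :=
      (hasDerivAt_id z).mul hG
    have heq : (1 : ℂ) * (∫ t in (0:ℝ)..1, h ((t:ℂ)*z)) +
        z * ∫ t in (0:ℝ)..1, (t:ℂ) * deriv h ((t:ℂ)*z) = h z := by
      rw [one_mul, ← intervalIntegral.integral_const_mul,
        ← intervalIntegral.integral_add (intervalIntegrable_scale hh.continuousOn hz)]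
      · rw [← ftc_scale hh hz]
        apply intervalIntegral.integral_congr
        intro t _
        ring
      · have : IntervalIntegrable (fun t : ℝ => (t:ℂ) * deriv h ((t:ℂ)*z))
            MeasureTheory.volume 0 1 := by
          apply ContinuousOn.intervalIntegrable
          rw [Set.uIcc_of_le zero_le_one]
          exact (Complex.continuous_ofReal.continuousOn).mul
            (contOn_comp_scale (diffOn_deriv hh).continuousOn hz)
        exact this.const_mul z
    rw [heq] at hmain
    exact hmain
  · -- measurability of F x near z
    filter_upwards [ball_mem_nhds z hεpos] with x hx
    exact aesm_scale hh.continuousOn (hball_mem x hx)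
  · exact intervalIntegrable_scale hh.continuousOn hz
  · -- measurability of F' z
    rw [Set.uIoc_of_le zero_le_one]
    apply ContinuousOn.aestronglyMeasurable _ measurableSet_Ioc
    apply ContinuousOn.mono _ Set.Ioc_subset_Icc_self
    exact (Complex.continuous_ofReal.continuousOn).mul
      (contOn_comp_scale (diffOn_deriv hh).continuousOn hz)
  · -- uniform bound
    apply Filter.Eventually.of_forall
    intro t ht x hx
    have hmem := hball x hx t ht
    rw [Set.uIoc_of_le zero_le_one] at ht
    calc ‖(t:ℂ) * deriv h ((t:ℂ)*x)‖ = |t| * ‖deriv h ((t:ℂ)*x)‖ := by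
          rw [norm_mul, Complex.norm_real, Real.norm_eq_abs]
      _ ≤ 1 * M := mul_le_mul (abs_le.2 ⟨by linarith [ht.1], ht.2⟩) (hM _ hmem)
          (norm_nonneg _) zero_le_one
      _ = M := one_mul M
  · exact intervalIntegrable_const
  · -- differentiability in x
    apply Filter.Eventually.of_forall
    intro t ht x hx
    have hmem : (t:ℂ)*x ∈ UDisk := hsub (hball x hx t ht)
    have hd : HasDerivAt h (deriv h ((t:ℂ)*x)) ((t:ℂ)*x) :=
      (hh.differentiableAt (isOpen_UDisk.mem_nhds hmem)).hasDerivAt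
    have hinner : HasDerivAt (fun y : ℂ => (t:ℂ)*y) (t:ℂ) x := by
      simpa using (hasDerivAt_id x).const_mul (t:ℂ)
    have h2 : HasDerivAt (fun y : ℂ => h ((t:ℂ)*y)) (deriv h ((t:ℂ)*x) * (t:ℂ)) x :=
      HasDerivAt.comp x hd hinner
    simpa [mul_comm] using h2

lemma intOp_zero (h : ℂ → ℂ) : intOp h 0 = 0 := by simp [intOp]

lemma diffOn_intOp {h : ℂ → ℂ} (hh : DifferentiableOn ℂ h UDisk) :
    DifferentiableOn ℂ (intOp h) UDisk := fun z hz =>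
  ((hasDerivAt_intOp hh hz).differentiableAt).differentiableWithinAt

lemma deriv_intOp {h : ℂ → ℂ} (hh : DifferentiableOn ℂ h UDisk) {z : ℂ} (hz : z ∈ UDisk) :
    deriv (intOp h) z = h z := (hasDerivAt_intOp hh hz).deriv

lemma diffOn_iterate {h : ℂ → ℂ} (hh : DifferentiableOn ℂ h UDisk) (j : ℕ) :
    DifferentiableOn ℂ (intOp^[j] h) UDisk := by
  induction j generalizing h with
  | zero => simpa using hh
  | succ m ih =>
    rw [Function.iterate_succ_apply]
    exact ih (diffOn_intOp hh)

/-! ### The basic rpow integral -/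

lemma rpow_integral {r γ : ℝ} (hr0 : 0 ≤ r) (hr1 : r < 1) (hγ : 0 < γ) :
    (∫ t in (0:ℝ)..1, r * (1 - t*r) ^ (-(γ+1))) = (1/γ) * ((1-r) ^ (-γ) - 1) := by
  have hbase : ∀ t : ℝ, t ∈ Set.uIcc (0:ℝ) 1 → 0 < 1 - t*r := by
    intro t ht
    rw [Set.uIcc_of_le zero_le_one] at ht
    nlinarith [ht.1, ht.2]
  have hderiv : ∀ t ∈ Set.uIcc (0:ℝ) 1,
      HasDerivAt (fun s : ℝ => (1/γ) * (1 - s*r) ^ (-γ)) (r * (1 - t*r) ^ (-(γ+1))) t := by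
    intro t ht
    have hb := hbase t ht
    have hinner : HasDerivAt (fun s : ℝ => 1 - s*r) (-r) t := by
      simpa using ((hasDerivAt_id t).mul_const r).const_sub 1
    have houter : HasDerivAt (fun x : ℝ => x ^ (-γ)) (-γ * (1 - t*r) ^ (-γ - 1)) (1 - t*r) :=
      Real.hasDerivAt_rpow_const (Or.inl hb.ne')
    have hcomp := (houter.comp t hinner).const_mul (1/γ)
    have : (1/γ) * (-γ * (1 - t*r) ^ (-γ - 1) * -r) = r * (1 - t*r) ^ (-(γ+1)) := by
      rw [show -γ - 1 = -(γ+1) by ring]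
      field_simp
    rwa [this] at hcomp
  have hint : IntervalIntegrable (fun t : ℝ => r * (1 - t*r) ^ (-(γ+1)))
      MeasureTheory.volume 0 1 := by
    apply ContinuousOn.intervalIntegrable
    apply ContinuousOn.const_smul (M := ℝ)
    apply ContinuousOn.rpow_const
    · exact (continuous_const.sub (continuous_id.mul continuous_const)).continuousOn
    · intro t ht
      exact Or.inl (hbase t ht).ne'
  rw [intervalIntegral.integral_eq_sub_of_hasDerivAt hderiv hint]
  norm_num [Real.one_rpow]
  ring

/-! ### Growth of `intOp` -/

lemma intOp_growth {h : ℂ → ℂ} (hh : ContinuousOn h UDisk) {γ C : ℝ} (hγ : 0 < γ)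
    (hC : 0 ≤ C)
    (hb : ∀ z ∈ UDisk, ‖h z‖ ≤ C * (1 - ‖z‖) ^ (-(γ+1))) :
    ∀ z ∈ UDisk, ‖intOp h z‖ ≤ C / γ * (1 - ‖z‖) ^ (-γ) := by
  intro z hz
  set r : ℝ := ‖z‖ with hrdef
  have hr0 : 0 ≤ r := norm_nonneg z
  have hr1 : r < 1 := mem_UDisk.1 hz
  have hgint : IntervalIntegrable (fun t : ℝ => C * (1 - t*r) ^ (-(γ+1)))
      MeasureTheory.volume 0 1 := by
    apply ContinuousOn.intervalIntegrable
    apply ContinuousOn.const_smul (M := ℝ)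
    apply ContinuousOn.rpow_const
    · exact (continuous_const.sub (continuous_id.mul continuous_const)).continuousOn
    · intro t ht
      rw [Set.uIcc_of_le zero_le_one] at ht
      have : 0 < 1 - t*r := by nlinarith [ht.1, ht.2]
      exact Or.inl this.ne'
  have hbound : ‖∫ t in (0:ℝ)..1, h ((t:ℂ)*z)‖ ≤
      |∫ t in (0:ℝ)..1, C * (1 - t*r) ^ (-(γ+1))| := by
    apply intervalIntegral.norm_integral_le_abs_of_norm_le _ hgint
    apply MeasureTheory.ae_restrict_of_forall_mem measurableSet_uIoc
    intro t ht
    rw [Set.uIoc_of_le zero_le_one] at ht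
    have hmem : (t:ℂ)*z ∈ UDisk := scaled_mem hz ht.1.le ht.2
    have habs : ‖(t:ℂ)*z‖ = t * r := by
      rw [norm_mul, Complex.norm_real, Real.norm_eq_abs, _root_.abs_of_nonneg ht.1.le]
    calc ‖h ((t:ℂ)*z)‖ = ‖h ((t:ℂ)*z)‖ := rfl
      _ ≤ C * (1 - ‖(t:ℂ)*z‖) ^ (-(γ+1)) := hb _ hmem
      _ = C * (1 - t*r) ^ (-(γ+1)) := by rw [habs]
  have hg_nonneg : (0:ℝ) ≤ ∫ t in (0:ℝ)..1, C * (1 - t*r) ^ (-(γ+1)) := by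
    apply intervalIntegral.integral_nonneg zero_le_one
    intro t ht
    have : 0 < 1 - t*r := by nlinarith [ht.1, ht.2]
    positivity
  have hval : r * ∫ t in (0:ℝ)..1, C * (1 - t*r) ^ (-(γ+1)) =
      C * ((1/γ) * ((1-r) ^ (-γ) - 1)) := by
    rw [← rpow_integral hr0 hr1 hγ, ← intervalIntegral.integral_const_mul,
      ← intervalIntegral.integral_const_mul]
    apply intervalIntegral.integral_congr
    intro t _
    ring
  calc ‖intOp h z‖ = r * ‖∫ t in (0:ℝ)..1, h ((t:ℂ)*z)‖ := by
        rw [intOp, norm_mul]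
    _ ≤ r * |∫ t in (0:ℝ)..1, C * (1 - t*r) ^ (-(γ+1))| :=
        mul_le_mul_of_nonneg_left hbound hr0
    _ = r * ∫ t in (0:ℝ)..1, C * (1 - t*r) ^ (-(γ+1)) := by
        rw [_root_.abs_of_nonneg hg_nonneg]
    _ = C * ((1/γ) * ((1-r) ^ (-γ) - 1)) := hval
    _ ≤ C / γ * (1-r) ^ (-γ) := by
        have h1 : (0:ℝ) < (1-r) ^ (-γ) := Real.rpow_pos_of_pos (by linarith) _
        rw [div_eq_mul_inv]
        have : (1/γ) * ((1-r) ^ (-γ) - 1) ≤ γ⁻¹ * (1-r) ^ (-γ) := by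
          rw [one_div]
          apply mul_le_mul_of_nonneg_left _ (inv_nonneg.2 hγ.le)
          linarith
        calc C * ((1/γ) * ((1-r) ^ (-γ) - 1)) ≤ C * (γ⁻¹ * (1-r) ^ (-γ)) :=
              mul_le_mul_of_nonneg_left this hC
          _ = C * γ⁻¹ * (1-r) ^ (-γ) := by ring

/-! ### Cauchy estimate -/

lemma cauchy_est {h : ℂ → ℂ} (hh : DifferentiableOn ℂ h UDisk) {γ C : ℝ} (hγ : γ ≤ 0 ∨ 0 ≤ γ)
    (hC : 0 ≤ C) (hγ' : 0 ≤ γ)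
    (hb : ∀ z ∈ UDisk, ‖h z‖ ≤ C * (1 - ‖z‖) ^ (-γ)) :
    ∀ z ∈ UDisk, ‖deriv h z‖ ≤
      C * 2 ^ (γ+1) * (1 - ‖z‖) ^ (-(γ+1)) := by
  intro z hz
  set R : ℝ := (1 - ‖z‖) / 2 with hRdef
  have h1z := oneSubAbs_pos hz
  have hR : 0 < R := by rw [hRdef]; linarith
  have hsub : closedBall z R ⊆ UDisk := by
    intro w hw
    rw [mem_closedBall] at hw
    rw [mem_UDisk]
    calc ‖w‖ = ‖w - z + z‖ := by rw [sub_add_cancel]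
      _ ≤ ‖w - z‖ + ‖z‖ := norm_add_le _ _
      _ ≤ R + ‖z‖ := add_le_add (by rwa [dist_eq_norm] at hw) le_rfl
      _ < 1 := by rw [hRdef]; linarith
  have hdc : DiffContOnCl ℂ h (ball z R) := by
    apply DifferentiableOn.diffContOnCl
    rw [closure_ball z hR.ne']
    exact hh.mono hsub
  have hsphere : ∀ w ∈ sphere z R, ‖h w‖ ≤ C * R ^ (-γ) := by
    intro w hw
    have hwmem : w ∈ UDisk := hsub (sphere_subset_closedBall hw)
    have hw1 : R ≤ 1 - ‖w‖ := by
      rw [mem_sphere_iff_norm] at hw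
      have : ‖w‖ ≤ ‖z‖ + R := by
        calc ‖w‖ = ‖w - z + z‖ := by rw [sub_add_cancel]
          _ ≤ ‖w - z‖ + ‖z‖ := norm_add_le _ _
          _ = R + ‖z‖ := by rw [hw]
          _ = ‖z‖ + R := by ring
      rw [hRdef] at *
      linarith
    calc ‖h w‖ = ‖h w‖ := rfl
      _ ≤ C * (1 - ‖w‖) ^ (-γ) := hb _ hwmem
      _ ≤ C * R ^ (-γ) := by
          apply mul_le_mul_of_nonneg_left _ hC
          exact Real.rpow_le_rpow_of_nonpos hR hw1 (by linarith)
  have hder := Complex.norm_deriv_le_of_forall_mem_sphere_norm_le hR hdc hsphere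
  calc ‖deriv h z‖ = ‖deriv h z‖ := rfl
    _ ≤ C * R ^ (-γ) / R := hder
    _ = C * R ^ (-(γ+1)) := by
        rw [mul_div_assoc]
        congr 1
        rw [div_eq_mul_inv, ← Real.rpow_neg_one R, ← Real.rpow_add hR]
        congr 1
        ring
    _ = C * 2 ^ (γ+1) * (1 - ‖z‖) ^ (-(γ+1)) := by
        rw [hRdef, Real.div_rpow h1z.le (by norm_num : (0:ℝ) ≤ 2),
          Real.rpow_neg (show (0:ℝ) ≤ 2 by norm_num) (γ+1), div_inv_eq_mul]
        ring

/-! ### Bloch space helpers -/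

lemma le_bSemi {α : ℝ} {f : ℂ → ℂ} (hf : MemBloch α f) {z : ℂ} (hz : z ∈ UDisk) :
    (1 - ‖z‖ ^ 2) ^ α * ‖deriv f z‖ ≤ bSemi α f := by
  obtain ⟨-, C, hC⟩ := hf
  have hbdd : BddAbove (Set.range fun w : UDisk =>
      (1 - ‖(w : ℂ)‖ ^ 2) ^ α * ‖deriv f (w : ℂ)‖) := by
    refine ⟨C, ?_⟩
    rintro x ⟨w, rfl⟩
    exact hC _ w.2
  exact le_ciSup hbdd ⟨z, hz⟩

lemma bSemi_nonneg {α : ℝ} {f : ℂ → ℂ} (hf : MemBloch α f) : 0 ≤ bSemi α f := by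
  refine le_trans ?_ (le_bSemi hf zero_mem_UDisk)
  have h2 := oneSubSq_pos zero_mem_UDisk
  positivity

lemma bSemi_le {α C : ℝ} {f : ℂ → ℂ}
    (h : ∀ z ∈ UDisk, (1 - ‖z‖ ^ 2) ^ α * ‖deriv f z‖ ≤ C) :
    bSemi α f ≤ C :=
  ciSup_le fun w => h _ w.2

lemma abs_apply_zero_le_bNorm {α : ℝ} {f : ℂ → ℂ} (hf : MemBloch α f) :
    ‖f 0‖ ≤ bNorm α f := by
  have := bSemi_nonneg hf
  rw [bNorm]; linarith

lemma bSemi_le_bNorm {α : ℝ} (f : ℂ → ℂ) : bSemi α f ≤ bNorm α f := by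
  have : (0:ℝ) ≤ ‖f 0‖ := norm_nonneg _
  rw [bNorm]; linarith

lemma bNorm_nonneg {α : ℝ} {f : ℂ → ℂ} (hf : MemBloch α f) : 0 ≤ bNorm α f :=
  le_trans (norm_nonneg _) (abs_apply_zero_le_bNorm hf)

/-- Pointwise derivative bound from the Bloch seminorm. -/
lemma deriv_le_of_memBloch {α : ℝ} {f : ℂ → ℂ} (hα : 0 ≤ α) (hf : MemBloch α f)
    {z : ℂ} (hz : z ∈ UDisk) :
    ‖deriv f z‖ ≤ bSemi α f * (1 - ‖z‖) ^ (-α) := by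
  have h1 := oneSubAbs_pos hz
  have h2 := oneSubSq_pos hz
  have key := le_bSemi hf hz
  have hmono : (1 - ‖z‖) ^ α ≤ (1 - ‖z‖ ^ 2) ^ α :=
    Real.rpow_le_rpow h1.le (oneSubAbs_le_oneSubSq hz) hα
  have h3 : (1 - ‖z‖) ^ α * ‖deriv f z‖ ≤ bSemi α f := by
    refine le_trans ?_ key
    exact mul_le_mul_of_nonneg_right hmono (norm_nonneg _)
  have hpos : (0:ℝ) < (1 - ‖z‖) ^ α := Real.rpow_pos_of_pos h1 _
  rw [Real.rpow_neg h1.le, ← div_eq_mul_inv, le_div_iff₀ hpos]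
  linarith [h3, mul_comm ((1 - ‖z‖) ^ α) (‖deriv f z‖)]

/-- `f = f 0 + intOp (deriv f)` on the disk. -/
lemma eq_add_intOp_deriv {f : ℂ → ℂ} (hf : DifferentiableOn ℂ f UDisk) {z : ℂ}
    (hz : z ∈ UDisk) : f z = f 0 + intOp (deriv f) z := by
  have hderiv : ∀ t ∈ Set.uIcc (0:ℝ) 1,
      HasDerivAt (fun s : ℝ => f ((s:ℂ)*z)) (z * deriv f ((t:ℂ)*z)) t := by
    intro t ht
    rw [Set.uIcc_of_le zero_le_one] at ht
    exact hasDerivAt_comp_scale hf hz ht.1 ht.2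
  have hint : IntervalIntegrable (fun t : ℝ => z * deriv f ((t:ℂ)*z))
      MeasureTheory.volume 0 1 := by
    apply ContinuousOn.intervalIntegrable
    rw [Set.uIcc_of_le zero_le_one]
    exact (contOn_comp_scale (diffOn_deriv hf).continuousOn hz).const_smul z
  have := intervalIntegral.integral_eq_sub_of_hasDerivAt hderiv hint
  simp only [Complex.ofReal_one, one_mul, Complex.ofReal_zero, zero_mul] at this
  rw [intOp, ← intervalIntegral.integral_const_mul, this]
  ring

/-- Pointwise growth bound for Bloch functions. -/
lemma memBloch_growth {α : ℝ} (hα : 1 < α) {f : ℂ → ℂ} (hf : MemBloch α f)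
    {z : ℂ} (hz : z ∈ UDisk) :
    ‖f z‖ ≤ (1 + 1/(α-1)) * bNorm α f * (1 - ‖z‖) ^ (-(α-1)) := by
  have h1 := oneSubAbs_pos hz
  have hγ : 0 < α - 1 := by linarith
  have hS : 0 ≤ bSemi α f := bSemi_nonneg hf
  have hgrow := intOp_growth (diffOn_deriv hf.1).continuousOn hγ hS
    (C := bSemi α f) ?_ z hz
  · have hone : (1:ℝ) ≤ (1 - ‖z‖) ^ (-(α-1)) :=
      Real.one_le_rpow_of_pos_of_le_one_of_nonpos h1 (by
        have := norm_nonneg z; linarith) (by linarith)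
    have hrp : (0:ℝ) ≤ (1 - ‖z‖) ^ (-(α-1)) := by linarith
    have hN := bNorm_nonneg hf
    calc ‖f z‖ = ‖f 0 + intOp (deriv f) z‖ := by
          rw [← eq_add_intOp_deriv hf.1 hz]
      _ ≤ ‖f 0‖ + ‖intOp (deriv f) z‖ := norm_add_le _ _
      _ ≤ ‖f 0‖ + bSemi α f / (α-1) * (1 - ‖z‖) ^ (-(α-1)) := by
          linarith [hgrow]
      _ ≤ ‖f 0‖ * (1 - ‖z‖) ^ (-(α-1)) +
            bSemi α f / (α-1) * (1 - ‖z‖) ^ (-(α-1)) := by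
          have := norm_nonneg (f 0)
          nlinarith
      _ = (‖f 0‖ + bSemi α f / (α-1)) * (1 - ‖z‖) ^ (-(α-1)) := by
          ring
      _ ≤ (1 + 1/(α-1)) * bNorm α f * (1 - ‖z‖) ^ (-(α-1)) := by
          apply mul_le_mul_of_nonneg_right _ hrp
          have h1' := abs_apply_zero_le_bNorm hf
          have h2' := bSemi_le_bNorm (α := α) f
          have hinv : 0 < 1/(α-1) := by positivity
          calc ‖f 0‖ + bSemi α f / (α-1)
              ≤ bNorm α f + bNorm α f * (1/(α-1)) := by
                rw [div_eq_mul_inv, ← one_div]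
                exact add_le_add h1' (mul_le_mul_of_nonneg_right h2' hinv.le)
            _ = (1 + 1/(α-1)) * bNorm α f := by ring
  · intro w hw
    have := deriv_le_of_memBloch (by linarith : (0:ℝ) ≤ α) hf hw
    rwa [show -(α - 1 + 1) = -α by ring]

/-! ### Iteration lemmas -/

lemma iter_growth {β : ℝ} (hβ : 0 < β) : ∀ j : ℕ, ∃ K : ℝ, 0 ≤ K ∧ ∀ h : ℂ → ℂ,
    DifferentiableOn ℂ h UDisk → ∀ C : ℝ, 0 ≤ C →
    (∀ z ∈ UDisk, ‖h z‖ ≤ C * (1 - ‖z‖) ^ (-(β + j))) →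
    ∀ z ∈ UDisk, ‖intOp^[j] h z‖ ≤ K * C * (1 - ‖z‖) ^ (-β) := by
  intro j
  induction j with
  | zero =>
    refine ⟨1, zero_le_one, fun h hh C hC hb z hz => ?_⟩
    have := hb z hz
    simpa using this
  | succ m ih =>
    obtain ⟨K, hK0, hK⟩ := ih
    have hγ : 0 < β + m := by positivity
    refine ⟨K / (β + m), by positivity, fun h hh C hC hb z hz => ?_⟩
    have hb' : ∀ w ∈ UDisk, ‖h w‖ ≤ C * (1 - ‖w‖) ^ (-((β + m) + 1)) := by
      intro w hw
      have := hb w hw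
      rwa [show -(β + ((m:ℕ)+1 : ℕ)) = -((β + m) + 1) by push_cast; ring] at this
    have hgrow := intOp_growth hh.continuousOn hγ hC hb'
    have := hK (intOp h) (diffOn_intOp hh) (C / (β + m)) (by positivity) hgrow z hz
    rw [Function.iterate_succ_apply]
    calc ‖intOp^[m] (intOp h) z‖ ≤ K * (C / (β + m)) * (1 - ‖z‖) ^ (-β) :=
          this
      _ = K / (β + m) * C * (1 - ‖z‖) ^ (-β) := by ring

lemma iter_reverse {β : ℝ} (hβ : 0 < β) : ∀ j : ℕ, ∃ K : ℝ, 0 ≤ K ∧ ∀ h : ℂ → ℂ,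
    DifferentiableOn ℂ h UDisk → ∀ B : ℝ, 0 ≤ B →
    (∀ z ∈ UDisk, ‖intOp^[j] h z‖ ≤ B * (1 - ‖z‖) ^ (-β)) →
    ∀ z ∈ UDisk, ‖h z‖ ≤ K * B * (1 - ‖z‖) ^ (-(β + j)) := by
  intro j
  induction j with
  | zero =>
    refine ⟨1, zero_le_one, fun h hh B hB hb z hz => ?_⟩
    have := hb z hz
    simpa using this
  | succ m ih =>
    obtain ⟨K, hK0, hK⟩ := ih
    have hγ : (0:ℝ) ≤ β + m := by positivity
    refine ⟨K * 2 ^ ((β + m) + 1), by positivity, fun h hh B hB hb z hz => ?_⟩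
    have hb' : ∀ w ∈ UDisk, ‖intOp^[m] (intOp h) w‖ ≤
        B * (1 - ‖w‖) ^ (-β) := by
      intro w hw
      have := hb w hw
      rwa [Function.iterate_succ_apply] at this
    have hIH := hK (intOp h) (diffOn_intOp hh) B hB hb'
    have hcauchy := cauchy_est (diffOn_intOp hh) (Or.inr hγ) (by positivity : 0 ≤ K * B) hγ
      (fun w hw => by
        have := hIH w hw
        rwa [show K * B * (1 - ‖w‖) ^ (-(β + (m:ℕ))) =
          K * B * (1 - ‖w‖) ^ (-(β + m)) by norm_num] at this) z hz
    rw [← deriv_intOp hh hz]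
    calc ‖deriv (intOp h) z‖
        ≤ K * B * 2 ^ ((β + m) + 1) * (1 - ‖z‖) ^ (-((β + m) + 1)) := hcauchy
      _ = K * 2 ^ ((β + m) + 1) * B * (1 - ‖z‖) ^ (-(β + ((m:ℕ)+1:ℕ))) := by
          rw [show -(β + ((m:ℕ)+1:ℕ) : ℝ) = -((β + m) + 1) by push_cast; ring]
          ring

/-! ### Test functions -/

def testF (α : ℝ) (w : ℂ) : ℂ → ℂ :=
  fun z => (1 - (starRingEnd ℂ) w * z) ^ (((1 - α : ℝ) : ℂ))

lemma testF_base_re {w z : ℂ} (hw : w ∈ UDisk) (hz : z ∈ UDisk) :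
    1 - ‖z‖ ≤ (1 - (starRingEnd ℂ) w * z).re := by
  have h1 : ((starRingEnd ℂ) w * z).re ≤ ‖(starRingEnd ℂ) w * z‖ :=
    Complex.re_le_norm _
  have h2 : ‖(starRingEnd ℂ) w * z‖ ≤ ‖z‖ := by
    rw [norm_mul, Complex.norm_conj]
    calc ‖w‖ * ‖z‖ ≤ 1 * ‖z‖ :=
          mul_le_mul_of_nonneg_right (mem_UDisk.1 hw).le (norm_nonneg z)
      _ = ‖z‖ := one_mul _
  have : (1 - (starRingEnd ℂ) w * z).re = 1 - ((starRingEnd ℂ) w * z).re := by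
    simp [Complex.sub_re]
  rw [this]
  linarith

lemma testF_base_pos {w z : ℂ} (hw : w ∈ UDisk) (hz : z ∈ UDisk) :
    0 < (1 - (starRingEnd ℂ) w * z).re :=
  lt_of_lt_of_le (oneSubAbs_pos hz) (testF_base_re hw hz)

lemma testF_base_abs {w z : ℂ} (hw : w ∈ UDisk) (hz : z ∈ UDisk) :
    1 - ‖z‖ ≤ ‖1 - (starRingEnd ℂ) w * z‖ :=
  le_trans (testF_base_re hw hz) (Complex.re_le_norm _)

lemma abs_cpow_realExp {u : ℂ} (hu : u ≠ 0) (r : ℝ) :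
    ‖u ^ ((r : ℝ) : ℂ)‖ = ‖u‖ ^ r := by
  rw [Complex.norm_cpow_of_ne_zero hu]
  simp

lemma hasDerivAt_testF {α : ℝ} {w z : ℂ} (hw : w ∈ UDisk) (hz : z ∈ UDisk) :
    HasDerivAt (testF α w)
      (((1 - α : ℝ) : ℂ) * (1 - (starRingEnd ℂ) w * z) ^ ((((1 - α : ℝ) : ℂ)) - 1) *
        (-(starRingEnd ℂ) w)) z := by
  have hinner : HasDerivAt (fun y : ℂ => 1 - (starRingEnd ℂ) w * y) (-(starRingEnd ℂ) w) z := by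
    simpa using ((hasDerivAt_id z).const_mul ((starRingEnd ℂ) w)).const_sub 1
  exact hinner.cpow_const (Or.inl (testF_base_pos hw hz))

lemma memBloch_testF {α : ℝ} (hα : 1 < α) {w : ℂ} (hw : w ∈ UDisk) :
    MemBloch α (testF α w) ∧ bNorm α (testF α w) ≤ 1 + (α-1) * 2 ^ α := by
  have hbound : ∀ z ∈ UDisk,
      (1 - ‖z‖ ^ 2) ^ α * ‖deriv (testF α w) z‖ ≤ (α-1) * 2 ^ α := by
    intro z hz
    have h1 := oneSubAbs_pos hz
    have hd := (hasDerivAt_testF (α := α) hw hz).deriv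
    rw [hd]
    have hu0 : (1 - (starRingEnd ℂ) w * z) ≠ 0 := by
      intro h0
      have := testF_base_pos hw hz
      rw [h0] at this
      simp at this
    have hexp : (((1 - α : ℝ) : ℂ)) - 1 = (((-α : ℝ)) : ℂ) := by push_cast; ring
    have habs : ‖(1 - (starRingEnd ℂ) w * z) ^ ((((1 - α : ℝ) : ℂ)) - 1)‖ =
        ‖1 - (starRingEnd ℂ) w * z‖ ^ (-α) := by
      rw [hexp, abs_cpow_realExp hu0]
    rw [norm_mul, norm_mul, habs]
    have h2 : ‖((1 - α : ℝ) : ℂ)‖ = α - 1 := by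
      rw [Complex.norm_real, Real.norm_eq_abs, _root_.abs_of_nonpos (by linarith)]
      ring
    have h3 : ‖-(starRingEnd ℂ) w‖ ≤ 1 := by
      rw [norm_neg, Complex.norm_conj]
      exact (mem_UDisk.1 hw).le
    have h4 : ‖1 - (starRingEnd ℂ) w * z‖ ^ (-α) ≤ (1 - ‖z‖) ^ (-α) :=
      Real.rpow_le_rpow_of_nonpos h1 (testF_base_abs hw hz) (by linarith)
    have h5 : (1 - ‖z‖ ^ 2) ^ α ≤ 2 ^ α * (1 - ‖z‖) ^ α := by
      have := oneSubSq_rpow_le hz α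
      rwa [_root_.abs_of_nonneg (by linarith : (0:ℝ) ≤ α)] at this
    have hcancel : (1 - ‖z‖) ^ α * (1 - ‖z‖) ^ (-α) = 1 := by
      rw [← Real.rpow_add h1]
      norm_num
    calc (1 - ‖z‖ ^ 2) ^ α *
          (‖((1 - α : ℝ) : ℂ)‖ *
            ‖1 - (starRingEnd ℂ) w * z‖ ^ (-α) *
            ‖-(starRingEnd ℂ) w‖)
        ≤ (2 ^ α * (1 - ‖z‖) ^ α) *
          ((α - 1) * (1 - ‖z‖) ^ (-α) * 1) := by
          apply mul_le_mul h5 _ _ (mul_nonneg (by positivity) (Real.rpow_nonneg h1.le α))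
          · rw [h2]
            apply mul_le_mul _ h3 (norm_nonneg _)
              (mul_nonneg (by linarith) (Real.rpow_nonneg h1.le _))
            exact mul_le_mul_of_nonneg_left h4 (by linarith)
          · positivity
      _ = (α - 1) * 2 ^ α * ((1 - ‖z‖) ^ α * (1 - ‖z‖) ^ (-α)) := by ring
      _ = (α-1) * 2 ^ α := by rw [hcancel]; ring
  have hdiff : DifferentiableOn ℂ (testF α w) UDisk := fun z hz =>
    ((hasDerivAt_testF hw hz).differentiableAt).differentiableWithinAt
  have hmem : MemBloch α (testF α w) := ⟨hdiff, (α-1) * 2 ^ α, hbound⟩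
  refine ⟨hmem, ?_⟩
  have h0 : ‖testF α w 0‖ = 1 := by
    simp [testF, Complex.one_cpow]
  rw [bNorm, h0]
  have := bSemi_le hbound
  linarith

lemma testF_self {α : ℝ} {w : ℂ} (hw : w ∈ UDisk) :
    ‖testF α w w‖ = (1 - ‖w‖ ^ 2) ^ (1 - α) := by
  have h2 := oneSubSq_pos hw
  have hval : 1 - (starRingEnd ℂ) w * w = ((1 - ‖w‖ ^ 2 : ℝ) : ℂ) := by
    have : (starRingEnd ℂ) w * w = ((‖w‖ ^ 2 : ℝ) : ℂ) := by
      rw [mul_comm, Complex.mul_conj, Complex.sq_norm]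
    rw [this]
    push_cast
    ring
  have hne : ((1 - ‖w‖ ^ 2 : ℝ) : ℂ) ≠ 0 := by exact_mod_cast h2.ne'
  rw [testF, hval, abs_cpow_realExp hne]
  rw [Complex.norm_real, Real.norm_eq_abs, _root_.abs_of_pos h2]

/-! ### Auxiliary division trick -/

lemma rpow_div_trick {a e B X : ℝ} (ha : 0 < a) (hX : 0 ≤ X)
    (h : a ^ e * X ≤ B) : X ≤ B * a ^ (-e) := by
  have hp : (0:ℝ) < a ^ e := Real.rpow_pos_of_pos ha e
  rw [Real.rpow_neg ha.le, ← div_eq_mul_inv, le_div_iff₀ hp]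
  calc X * a ^ e = a ^ e * X := mul_comm _ _
    _ ≤ B := h

/-! ### The sufficiency direction -/

lemma sufficiency {α β : ℝ} (hα : 1 < α) (hβ : 0 < β) (m : ℕ)
    {g : ℂ → ℂ} (hg : DifferentiableOn ℂ g UDisk) {C : ℝ} (hC0 : 0 ≤ C)
    (hC : ∀ z ∈ UDisk,
      (1 - ‖z‖ ^ 2) ^ (((m+1 : ℕ) : ℝ) + β - α) * ‖g z‖ ≤ C) :
    BoundedOp α β (Ig g (m+1) 0) := by
  set e : ℝ := ((m+1 : ℕ) : ℝ) + β - α with he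
  set A : ℝ := 1 + 1/(α-1) with hA
  have hApos : 0 < A := by
    have h01 : (0:ℝ) < α - 1 := by linarith
    have : 0 < 1/(α-1) := by positivity
    rw [hA]; linarith
  obtain ⟨K, hK0, hK⟩ := iter_growth hβ m
  -- pointwise bound for g
  have hgb : ∀ z ∈ UDisk, ‖g z‖ ≤ C * 2 ^ |e| * (1 - ‖z‖) ^ (-e) := by
    intro z hz
    have h2 := oneSubSq_pos hz
    have h1 := rpow_div_trick h2 (norm_nonneg _) (hC z hz)
    calc ‖g z‖ ≤ C * (1 - ‖z‖ ^ 2) ^ (-e) := h1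
      _ ≤ C * (2 ^ |(-e)| * (1 - ‖z‖) ^ (-e)) :=
          mul_le_mul_of_nonneg_left (oneSubSq_rpow_le hz (-e)) hC0
      _ = C * 2 ^ |e| * (1 - ‖z‖) ^ (-e) := by rw [abs_neg]; ring
  set Q : ℝ := 2 ^ β * (K * (A * (C * 2 ^ |e|))) with hQ
  have hQ0 : 0 ≤ Q := by positivity
  refine ⟨Q + 1, by positivity, fun f hf => ?_⟩
  set N : ℝ := bNorm α f with hN
  have hN0 : 0 ≤ N := bNorm_nonneg hf
  set fg : ℂ → ℂ := fun z => f z * g z with hfg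
  have hfgdiff : DifferentiableOn ℂ fg UDisk := hf.1.mul hg
  -- bound on fg
  have hfgb : ∀ z ∈ UDisk, ‖fg z‖ ≤
      (A * (C * 2 ^ |e|)) * N * (1 - ‖z‖) ^ (-(β + m)) := by
    intro z hz
    have h1 := oneSubAbs_pos hz
    have hfz := memBloch_growth hα hf hz
    have hgz := hgb z hz
    have hmul : ‖fg z‖ = ‖f z‖ * ‖g z‖ := norm_mul _ _
    rw [hmul]
    calc ‖f z‖ * ‖g z‖
        ≤ (A * N * (1 - ‖z‖) ^ (-(α-1))) *
          (C * 2 ^ |e| * (1 - ‖z‖) ^ (-e)) := by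
          apply mul_le_mul hfz hgz (norm_nonneg _)
          positivity
      _ = (A * (C * 2 ^ |e|)) * N *
          ((1 - ‖z‖) ^ (-(α-1)) * (1 - ‖z‖) ^ (-e)) := by ring
      _ = (A * (C * 2 ^ |e|)) * N * (1 - ‖z‖) ^ (-(β + m)) := by
          rw [← Real.rpow_add h1]
          congr 1
          rw [he]
          push_cast
          ring
  have hiter := hK fg hfgdiff ((A * (C * 2 ^ |e|)) * N) (by positivity) hfgb
  -- identify T f
  have hinner : (fun z => iteratedDeriv 0 f z * g z) = fg := by
    funext z
    rw [iteratedDeriv_zero]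
  have hT : Ig g (m+1) 0 f = intOp (intOp^[m] fg) := by
    rw [Ig, hinner, Function.iterate_succ_apply']
  have hTdiff : DifferentiableOn ℂ (Ig g (m+1) 0 f) UDisk := by
    rw [hT]; exact diffOn_intOp (diffOn_iterate hfgdiff m)
  have hTzero : Ig g (m+1) 0 f 0 = 0 := by rw [hT]; exact intOp_zero _
  have hTderiv : ∀ z ∈ UDisk, deriv (Ig g (m+1) 0 f) z = intOp^[m] fg z := by
    intro z hz
    rw [hT]
    exact deriv_intOp (diffOn_iterate hfgdiff m) hz
  have hTbound : ∀ z ∈ UDisk, (1 - ‖z‖ ^ 2) ^ β *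
      ‖deriv (Ig g (m+1) 0 f) z‖ ≤ Q * N := by
    intro z hz
    have h1 := oneSubAbs_pos hz
    rw [hTderiv z hz]
    have h5 : (1 - ‖z‖ ^ 2) ^ β ≤ 2 ^ β * (1 - ‖z‖) ^ β := by
      have := oneSubSq_rpow_le hz β
      rwa [_root_.abs_of_nonneg hβ.le] at this
    calc (1 - ‖z‖ ^ 2) ^ β * ‖intOp^[m] fg z‖
        ≤ (2 ^ β * (1 - ‖z‖) ^ β) *
          (K * ((A * (C * 2 ^ |e|)) * N) * (1 - ‖z‖) ^ (-β)) := by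
          apply mul_le_mul h5 (hiter z hz) (norm_nonneg _)
          positivity
      _ = Q * N * ((1 - ‖z‖) ^ β * (1 - ‖z‖) ^ (-β)) := by
          rw [hQ]; ring
      _ = Q * N := by
          rw [← Real.rpow_add h1]
          norm_num
  constructor
  · exact ⟨hTdiff, Q * N, hTbound⟩
  · have hsemi : bSemi β (Ig g (m+1) 0 f) ≤ Q * N := bSemi_le hTbound
    rw [bNorm, hTzero, norm_zero]
    nlinarith

/-! ### The necessity direction -/

lemma necessity {α β : ℝ} (hα : 1 < α) (hβ : 0 < β) (m : ℕ)
    {g : ℂ → ℂ} (hg : DifferentiableOn ℂ g UDisk)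
    (hb : BoundedOp α β (Ig g (m+1) 0)) :
    ∃ C : ℝ, ∀ z ∈ UDisk,
      (1 - ‖z‖ ^ 2) ^ (((m+1:ℕ):ℝ) + β - α) * ‖g z‖ ≤ C := by
  obtain ⟨C₀, hC₀, hbdd⟩ := hb
  set M : ℝ := 1 + (α-1) * 2 ^ α with hM
  have hM0 : (0:ℝ) ≤ M := by
    have h2 : (0:ℝ) < 2 ^ α := Real.rpow_pos_of_pos two_pos α
    nlinarith
  obtain ⟨K, hK0, hK⟩ := iter_reverse hβ m
  refine ⟨K * (C₀ * M) * 2 ^ (β + m), fun w hw => ?_⟩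
  set fw : ℂ → ℂ := testF α w with hfw
  obtain ⟨hfwmem, hfwnorm⟩ := memBloch_testF hα hw
  obtain ⟨hTmem, hTnorm⟩ := hbdd fw hfwmem
  have hBnorm : bNorm β (Ig g (m+1) 0 fw) ≤ C₀ * M :=
    le_trans hTnorm (mul_le_mul_of_nonneg_left hfwnorm hC₀.le)
  set fgw : ℂ → ℂ := fun z => fw z * g z with hfgw
  have hfgwdiff : DifferentiableOn ℂ fgw UDisk := hfwmem.1.mul hg
  have hinner : (fun z => iteratedDeriv 0 fw z * g z) = fgw := by
    funext z
    rw [iteratedDeriv_zero]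
  have hT : Ig g (m+1) 0 fw = intOp (intOp^[m] fgw) := by
    rw [Ig, hinner, Function.iterate_succ_apply']
  have hTderiv : ∀ z ∈ UDisk, deriv (Ig g (m+1) 0 fw) z = intOp^[m] fgw z := by
    intro z hz
    rw [hT]
    exact deriv_intOp (diffOn_iterate hfgwdiff m) hz
  have hpoint : ∀ z ∈ UDisk, ‖intOp^[m] fgw z‖ ≤
      (C₀ * M) * (1 - ‖z‖) ^ (-β) := by
    intro z hz
    have h1 := oneSubAbs_pos hz
    have hsb := le_bSemi hTmem hz
    have hchain : (1 - ‖z‖ ^ 2) ^ β * ‖deriv (Ig g (m+1) 0 fw) z‖ ≤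
        C₀ * M := le_trans hsb (le_trans (bSemi_le_bNorm _) hBnorm)
    have hmono : (1 - ‖z‖) ^ β ≤ (1 - ‖z‖ ^ 2) ^ β :=
      Real.rpow_le_rpow h1.le (oneSubAbs_le_oneSubSq hz) hβ.le
    have hsmall : (1 - ‖z‖) ^ β * ‖deriv (Ig g (m+1) 0 fw) z‖ ≤
        C₀ * M :=
      le_trans (mul_le_mul_of_nonneg_right hmono (norm_nonneg _)) hchain
    have := rpow_div_trick h1 (norm_nonneg _) hsmall
    rwa [hTderiv z hz] at this
  have hrev := hK fgw hfgwdiff (C₀ * M) (mul_nonneg hC₀.le hM0) hpoint w hw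
  -- evaluate at w
  have hs := oneSubSq_pos hw
  have habs : ‖fgw w‖ =
      (1 - ‖w‖ ^ 2) ^ (1-α) * ‖g w‖ := by
    rw [hfgw]
    simp only [norm_mul]
    rw [hfw, testF_self hw]
  have hup : (1 - ‖w‖) ^ (-(β + (m:ℝ))) ≤
      2 ^ (β + m) * (1 - ‖w‖ ^ 2) ^ (-(β + (m:ℝ))) := by
    have := oneSubAbs_rpow_le hw (-(β + (m:ℝ)))
    rwa [abs_neg, _root_.abs_of_nonneg (by positivity : (0:ℝ) ≤ β + (m:ℝ))] at this
  have hgw : (1 - ‖w‖ ^ 2) ^ (1-α) * ‖g w‖ ≤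
      K * (C₀ * M) * (2 ^ (β + m) * (1 - ‖w‖ ^ 2) ^ (-(β + (m:ℝ)))) := by
    rw [← habs]
    calc ‖fgw w‖ ≤ K * (C₀ * M) * (1 - ‖w‖) ^ (-(β + (m:ℝ))) := hrev
      _ ≤ K * (C₀ * M) * (2 ^ (β + m) * (1 - ‖w‖ ^ 2) ^ (-(β + (m:ℝ)))) := by
          apply mul_le_mul_of_nonneg_left hup
          positivity
  have hsplit : (1 - ‖w‖ ^ 2) ^ (((m+1:ℕ):ℝ) + β - α) =
      (1 - ‖w‖ ^ 2) ^ (β + (m:ℝ)) * (1 - ‖w‖ ^ 2) ^ (1-α) := by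
    rw [← Real.rpow_add hs]
    congr 1
    push_cast
    ring
  rw [hsplit, mul_assoc]
  calc (1 - ‖w‖ ^ 2) ^ (β + (m:ℝ)) *
        ((1 - ‖w‖ ^ 2) ^ (1-α) * ‖g w‖)
      ≤ (1 - ‖w‖ ^ 2) ^ (β + (m:ℝ)) *
        (K * (C₀ * M) * (2 ^ (β + m) * (1 - ‖w‖ ^ 2) ^ (-(β + (m:ℝ))))) :=
        mul_le_mul_of_nonneg_left hgw (Real.rpow_nonneg hs.le _)
    _ = K * (C₀ * M) * 2 ^ (β + m) *
        ((1 - ‖w‖ ^ 2) ^ (β + (m:ℝ)) * (1 - ‖w‖ ^ 2) ^ (-(β + (m:ℝ)))) := by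
        ring
    _ = K * (C₀ * M) * 2 ^ (β + m) := by
        rw [← Real.rpow_add hs, show β + (m:ℝ) + -(β + (m:ℝ)) = 0 by ring, Real.rpow_zero,
          mul_one]

theorem stmt10 (α β : ℝ) (hα : 1 < α) (hβ : 0 < β) (n : ℕ) (hn : 1 ≤ n)
    (g : ℂ → ℂ) (hg : DifferentiableOn ℂ g UDisk) :
    BoundedOp α β (Ig g n 0) ↔
      ∃ C : ℝ, ∀ z ∈ UDisk,
        (1 - ‖z‖ ^ 2) ^ ((n : ℝ) + β - α) * ‖g z‖ ≤ C := by
  obtain ⟨m, rfl⟩ : ∃ m, n = m + 1 := ⟨n - 1, (Nat.succ_pred_eq_of_pos hn).symm⟩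
  constructor
  · intro hb
    exact necessity hα hβ m hg hb
  · rintro ⟨C, hC⟩
    apply sufficiency hα hβ m hg (C := max C 0) (le_max_right C 0)
    intro z hz
    exact le_trans (hC z hz) (le_max_left C 0)
end
end
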